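/- arXiv:2601.03566 — 9 statements merged into one kernel-verified Lean document; each statement's English description precedes it below -/
import Mathlib

section
/- If each local function f_i: R^d -> R is twice continuously differentiable with ||∇²f_i(θ)|| ≤ L_0^i + L_1^i ||∇f_i(θ)|| for all θ, and the gradient dissimilarity condition ||∇f_i(θ) - ∇F(θ)|| ≤ (ℓ-1)||∇F(θ)|| + b holds with ℓ ≥ 1, b > 0, where F(θ) = (1/N)∑_{i=1}^N f_i(θ), then F is (L_0, L_1)-smooth with L_0 = (1/N)∑_{i=1}^N (L_0^i + L_1^i b) and L_1 = (ℓ/N)∑_{i=1}^N L_1^i, i.e., ||∇²F(θ)|| ≤ L_0 + L_1 ||∇F(θ)|| for all θ. -/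
/-- If each local `f i` is `(L0 i, L1 i)`-smooth and the gradient dissimilarity
condition holds, then the average `F` is `(L0, L1)`-smooth with
`L0 = (1/N) ∑ (L0 i + L1 i * b)` and `L1 = (ℓ/N) ∑ L1 i`. -/
theorem stmt_0 {d N : ℕ} (hN : 0 < N)
    (f : Fin N → EuclideanSpace ℝ (Fin d) → ℝ)
    (L0 L1 : Fin N → ℝ) (hL0 : ∀ i, 0 < L0 i) (hL1 : ∀ i, 0 < L1 i)
    (ℓ b : ℝ) (hℓ : 1 ≤ ℓ) (hb : 0 < b)
    (hC2 : ∀ i, ContDiff ℝ 2 (f i))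
    (hsmooth : ∀ i θ,
      ‖fderiv ℝ (gradient (f i)) θ‖ ≤ L0 i + L1 i * ‖gradient (f i) θ‖)
    (F : EuclideanSpace ℝ (Fin d) → ℝ)
    (hF : ∀ θ, F θ = (1 / (N : ℝ)) * ∑ i, f i θ)
    (hdissim : ∀ i θ,
      ‖gradient (f i) θ - gradient F θ‖ ≤ (ℓ - 1) * ‖gradient F θ‖ + b) :
    ∀ θ, ‖fderiv ℝ (gradient F) θ‖ ≤
      (1 / (N : ℝ)) * ∑ i, (L0 i + L1 i * b) +
        ((ℓ / (N : ℝ)) * ∑ i, L1 i) * ‖gradient F θ‖ := by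
  have hFe : F = fun y => (1 / (N : ℝ)) * ∑ i, f i y := funext hF
  subst hFe
  intro θ
  have hNpos : (0:ℝ) < N := Nat.cast_pos.mpr hN
  have hdiff : ∀ i, Differentiable ℝ (f i) := fun i => (hC2 i).differentiable (by norm_num)
  -- gradient of the average is the average of gradients
  have hgradF : gradient (fun y => (1 / (N : ℝ)) * ∑ i, f i y)
      = fun x => (1 / (N : ℝ)) • ∑ i, gradient (f i) x := by
    apply gradient_eq
    intro x
    have h1 : HasFDerivAt (fun y => (1 / (N : ℝ)) * ∑ i, f i y)
        ((1 / (N : ℝ)) • ∑ i, fderiv ℝ (f i) x) x := by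
      have hsum : HasFDerivAt (fun y => ∑ i, f i y) (∑ i, fderiv ℝ (f i) x) x :=
        HasFDerivAt.fun_sum fun i _ => (hdiff i x).hasFDerivAt
      exact hsum.const_mul _
    have h2 := hasFDerivAt_iff_hasGradientAt.mp h1
    have h3 : (InnerProductSpace.toDual ℝ (EuclideanSpace ℝ (Fin d))).symm
        ((1 / (N : ℝ)) • ∑ i, fderiv ℝ (f i) x)
        = (1 / (N : ℝ)) • ∑ i, gradient (f i) x := by
      rw [map_smul, map_sum]
      rfl
    rwa [h3] at h2
  have hdg : ∀ i, DifferentiableAt ℝ (gradient (f i)) θ := by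
    intro i
    have h1 : Differentiable ℝ (fderiv ℝ (f i)) :=
      ((hC2 i).fderiv_right (m := 1) (by norm_num)).differentiable (by norm_num)
    have h2 : gradient (f i) = fun x => (InnerProductSpace.toDual ℝ (EuclideanSpace ℝ (Fin d))).symm (fderiv ℝ (f i) x) :=
      rfl
    rw [h2]
    exact ((InnerProductSpace.toDual ℝ (EuclideanSpace ℝ (Fin d))).symm.differentiable.comp h1) θ
  have hfd : fderiv ℝ (gradient (fun y => (1 / (N : ℝ)) * ∑ i, f i y)) θ
      = (1 / (N : ℝ)) • ∑ i, fderiv ℝ (gradient (f i)) θ := by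
    rw [hgradF]
    rw [fderiv_fun_const_smul (DifferentiableAt.fun_sum fun i _ => hdg i) ((1:ℝ)/N),
      fderiv_fun_sum fun i _ => hdg i]
  set c := ‖gradient (fun y => (1 / (N : ℝ)) * ∑ i, f i y) θ‖ with hc
  have hci : ∀ i, ‖gradient (f i) θ‖ ≤ ℓ * c + b := by
    intro i
    have := hdissim i θ
    calc ‖gradient (f i) θ‖
        = ‖(gradient (f i) θ - gradient (fun y => (1 / (N : ℝ)) * ∑ i, f i y) θ)
            + gradient (fun y => (1 / (N : ℝ)) * ∑ i, f i y) θ‖ := by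
          rw [sub_add_cancel]
      _ ≤ ‖gradient (f i) θ - gradient (fun y => (1 / (N : ℝ)) * ∑ i, f i y) θ‖ + c :=
          norm_add_le _ _
      _ ≤ ((ℓ - 1) * c + b) + c := by linarith
      _ = ℓ * c + b := by ring
  have hcnn : 0 ≤ c := norm_nonneg _
  calc ‖fderiv ℝ (gradient (fun y => (1 / (N : ℝ)) * ∑ i, f i y)) θ‖
      = (1 / (N : ℝ)) * ‖∑ i, fderiv ℝ (gradient (f i)) θ‖ := by
        rw [hfd, norm_smul, Real.norm_eq_abs, abs_of_pos (by positivity)]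
    _ ≤ (1 / (N : ℝ)) * ∑ i, ‖fderiv ℝ (gradient (f i)) θ‖ := by
        apply mul_le_mul_of_nonneg_left (norm_sum_le _ _) (by positivity)
    _ ≤ (1 / (N : ℝ)) * ∑ i, ((L0 i + L1 i * b) + ℓ * L1 i * c) := by
        apply mul_le_mul_of_nonneg_left _ (by positivity)
        apply Finset.sum_le_sum
        intro i _
        calc ‖fderiv ℝ (gradient (f i)) θ‖ ≤ L0 i + L1 i * ‖gradient (f i) θ‖ := hsmooth i θ
          _ ≤ L0 i + L1 i * (ℓ * c + b) := by
              have := hci i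
              nlinarith [le_of_lt (hL1 i)]
          _ = (L0 i + L1 i * b) + ℓ * L1 i * c := by ring
    _ = (1 / (N : ℝ)) * ∑ i, (L0 i + L1 i * b) + ((ℓ / (N : ℝ)) * ∑ i, L1 i) * c := by
        rw [Finset.sum_add_distrib, mul_add]
        congr 1
        rw [Finset.mul_sum, Finset.mul_sum, Finset.sum_mul]
        exact Finset.sum_congr rfl fun i _ => by ring
end

section
/- Let α > 0, c_0 > 0, v_i > 0 be constants, and let y ∈ R^d, g ∈ R^d be vectors. Define α_y = α·min{1, c_0/||y||} and ᾱ = α·min{1, c_0/(v_i ||g||)} (with the convention min{1, c_0/0} = 1). Then |α_y - ᾱ| · ||y|| ≤ ᾱ · ||y - v_i g||. -/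
lemma key_clip (c0 a b : ℝ) (hc0 : 0 < c0) (ha : 0 ≤ a) (hb : 0 ≤ b) :
    |(if a = 0 then (1:ℝ) else min 1 (c0 / a)) -
      (if b = 0 then (1:ℝ) else min 1 (c0 / b))| * a
      ≤ (if b = 0 then (1:ℝ) else min 1 (c0 / b)) * |a - b| := by
  rcases eq_or_lt_of_le ha with rfl | ha'
  · rw [mul_zero]
    apply mul_nonneg
    · split
      · norm_num
      · exact le_min (by norm_num) (by positivity)
    · exact abs_nonneg _
  · simp only [ha'.ne', if_false]
    rcases eq_or_lt_of_le hb with rfl | hb'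
    · simp only [if_true]
      rw [sub_zero, abs_of_pos ha', one_mul]
      have h1 : min 1 (c0 / a) ≤ 1 := min_le_left _ _
      have h2 : 0 ≤ min 1 (c0 / a) := le_min (by norm_num) (by positivity)
      rw [abs_sub_comm, abs_of_nonneg (by linarith)]
      nlinarith
    · simp only [hb'.ne', if_false]
      by_cases ha2 : a ≤ c0
      · have hma : min 1 (c0 / a) = 1 := min_eq_left ((one_le_div ha').mpr ha2)
        by_cases hb2 : b ≤ c0
        · have hmb : min 1 (c0 / b) = 1 := min_eq_left ((one_le_div hb').mpr hb2)
          simp [hma, hmb, abs_nonneg]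
        · push_neg at hb2
          have hmb : min 1 (c0 / b) = c0 / b := min_eq_right (by
            rw [div_le_one hb']; linarith)
          rw [hma, hmb]
          have hcb : c0 / b ≤ 1 := by rw [div_le_one hb']; linarith
          rw [abs_of_nonneg (by linarith : (0:ℝ) ≤ 1 - c0 / b),
            abs_of_nonpos (by linarith : a - b ≤ 0)]
          have hcbb : c0 / b * b = c0 := div_mul_cancel₀ c0 hb'.ne'
          nlinarith
      · push_neg at ha2
        have hma : min 1 (c0 / a) = c0 / a := min_eq_right (by
          rw [div_le_one ha']; linarith)
        rw [hma]
        by_cases hb2 : b ≤ c0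
        · have hmb : min 1 (c0 / b) = 1 := min_eq_left ((one_le_div hb').mpr hb2)
          rw [hmb, one_mul]
          have hca : c0 / a ≤ 1 := by rw [div_le_one ha']; linarith
          rw [abs_of_nonpos (by linarith)]
          have : c0 / a * a = c0 := div_mul_cancel₀ c0 ha'.ne'
          have hab : a - b ≤ |a - b| := le_abs_self _
          nlinarith
        · push_neg at hb2
          have hmb : min 1 (c0 / b) = c0 / b := min_eq_right (by
            rw [div_le_one hb']; linarith)
          rw [hmb]
          have h : c0 / a - c0 / b = c0 * (b - a) / (a * b) := by
            field_simp
          rw [h, abs_div, abs_mul, abs_of_pos hc0,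
            abs_of_pos (mul_pos ha' hb'), abs_sub_comm b a]
          apply le_of_eq
          field_simp

/-- Bound on the deviation between the locally clipped stepsize and the
reference clipped stepsize (with convention `min {1, c0/0} = 1`). -/
theorem stmt_1 {d : ℕ} (α c0 vi : ℝ) (hα : 0 < α) (hc0 : 0 < c0) (hvi : 0 < vi)
    (y g : EuclideanSpace ℝ (Fin d))
    (αy ᾱ : ℝ)
    (hαy : αy = α * (if ‖y‖ = 0 then 1 else min 1 (c0 / ‖y‖)))
    (hᾱ : ᾱ = α * (if ‖g‖ = 0 then 1 else min 1 (c0 / (vi * ‖g‖)))) :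
    |αy - ᾱ| * ‖y‖ ≤ ᾱ * ‖y - vi • g‖ := by
  set a := ‖y‖ with ha_def
  set b := vi * ‖g‖ with hb_def
  have hb0 : 0 ≤ b := by positivity
  have hgb : (‖g‖ = 0) ↔ (b = 0) := by
    simp [hb_def, mul_eq_zero, hvi.ne']
  have hᾱ' : ᾱ = α * (if b = 0 then 1 else min 1 (c0 / b)) := by
    rw [hᾱ]; by_cases h : ‖g‖ = 0
    · simp [h, hgb.mp h]
    · simp [h, hgb.not.mp h]
  have hnorm : ‖vi • g‖ = b := by
    rw [norm_smul, Real.norm_eq_abs, abs_of_pos hvi]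
  have hdist : |a - b| ≤ ‖y - vi • g‖ := by
    rw [← hnorm]; exact abs_norm_sub_norm_le y (vi • g)
  have key := key_clip c0 a b hc0 (norm_nonneg y) hb0
  have hmB_nonneg : 0 ≤ (if b = 0 then (1:ℝ) else min 1 (c0 / b)) := by
    split
    · norm_num
    · exact le_min (by norm_num) (by positivity)
  calc |αy - ᾱ| * a
      = α * (|(if a = 0 then (1:ℝ) else min 1 (c0 / a)) -
        (if b = 0 then (1:ℝ) else min 1 (c0 / b))| * a) := by
        rw [hαy, hᾱ', ← mul_sub, abs_mul, abs_of_pos hα]; ring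
    _ ≤ α * ((if b = 0 then (1:ℝ) else min 1 (c0 / b)) * |a - b|) := by
        apply mul_le_mul_of_nonneg_left key hα.le
    _ ≤ α * ((if b = 0 then (1:ℝ) else min 1 (c0 / b)) * ‖y - vi • g‖) := by
        apply mul_le_mul_of_nonneg_left (mul_le_mul_of_nonneg_left hdist hmB_nonneg) hα.le
    _ = ᾱ * ‖y - vi • g‖ := by rw [hᾱ']; ring
end

section
/- Let g: R^d -> R be (L_0, L_1)-smooth and lower bounded by f_* = inf g > -∞. Then for any x ∈ R^d, ||∇g(x)||² ≤ 2(L_0 + 2L_1 ||∇g(x)||)(g(x) - f_*). -/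
open Real Set InnerProductSpace intervalIntegral

private lemma exp_aux (K : ℝ) : (1 - K) * Real.exp K ≤ 1 := by
  have h := Real.add_one_le_exp (-K)
  have h2 : Real.exp (-K) * Real.exp K = 1 := by rw [← Real.exp_add]; simp
  nlinarith [mul_le_mul_of_nonneg_right h (Real.exp_pos K).le]

private lemma key_ineq {G K t : ℝ} (hG : 0 ≤ G) (hK : 0 < K) (hK1 : K < 1)
    (ht0 : 0 ≤ t)
    (hconv : Real.exp (K * t) ≤ 1 - t + t * Real.exp K) :
    G * (1 - K) * (Real.exp (K * t) - 1) ≤ G * t * K := by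
  nlinarith [mul_le_mul_of_nonneg_left hconv (mul_nonneg hG (by linarith : (0:ℝ) ≤ 1 - K)),
    mul_le_mul_of_nonneg_left (exp_aux K) (mul_nonneg hG ht0),
    mul_nonneg hG ht0]

set_option maxHeartbeats 1000000 in
/-- Sub-optimality gap bound for `(L0, L1)`-smooth lower bounded functions. -/
theorem stmt_4 {d : ℕ} (g : EuclideanSpace ℝ (Fin d) → ℝ)
    (L0 L1 : ℝ) (hL0 : 0 < L0) (hL1 : 0 < L1)
    (hC2 : ContDiff ℝ 2 g)
    (hsmooth : ∀ θ, ‖fderiv ℝ (gradient g) θ‖ ≤ L0 + L1 * ‖gradient g θ‖)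
    (hbdd : BddBelow (Set.range g)) :
    ∀ x, ‖gradient g x‖ ^ 2 ≤
      2 * (L0 + 2 * L1 * ‖gradient g x‖) * (g x - sInf (Set.range g)) := by
  have hgradC : ContDiff ℝ 1 (gradient g) :=
    ((toDual ℝ (EuclideanSpace ℝ (Fin d))).symm.contDiff).comp
      (hC2.fderiv_right (by norm_num))
  have hgdiff : ∀ θ, DifferentiableAt ℝ (gradient g) θ :=
    fun θ => (hgradC.differentiable (by norm_num)) θ
  have hgcont : Continuous (gradient g) := hgradC.continuous
  have hdiff : Differentiable ℝ g := hC2.differentiable (by norm_num)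
  have hkey : ∀ θ w, (fderiv ℝ g θ) w = (inner ℝ (gradient g θ) w : ℝ) := by
    intro θ w
    conv_lhs => rw [← (toDual ℝ _).apply_symm_apply (fderiv ℝ g θ)]
    simp [gradient]
  intro x
  set u := gradient g x with hu
  set G := ‖u‖ with hGdef
  have hinf_le : sInf (Set.range g) ≤ g x := csInf_le hbdd ⟨x, rfl⟩
  rcases eq_or_lt_of_le (norm_nonneg u) with hG0 | hG
  · -- gradient zero : trivial
    have hg0 : G = 0 := hG0.symm
    rw [hg0]
    nlinarith
  set M := L0 + 2 * L1 * G with hMdef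
  have hM : 0 < M := by positivity
  have hMG : L1 * G < M := by nlinarith
  set v := M⁻¹ • u with hvdef
  have hv : ‖v‖ = G / M := by
    rw [hvdef, norm_smul, norm_inv, Real.norm_eq_abs, abs_of_pos hM]
    rw [div_eq_inv_mul]
  set K := L1 * G / M with hKdef
  have hK : 0 < K := by positivity
  have hK1 : K < 1 := by
    rw [hKdef, div_lt_one hM]; exact hMG
  set ε := (L0 + L1 * G) * G / M with hεdef
  have hεK : ε = G * (1 - K) := by
    rw [hεdef, hKdef, div_eq_iff hM.ne', mul_assoc, one_sub_mul, div_mul_cancel₀ _ hM.ne', hMdef]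
    ring
  -- the path and its derivative
  have hγ : ∀ t : ℝ, HasDerivAt (fun s : ℝ => x - s • v) (-v) t := by
    intro t
    simpa using ((hasDerivAt_id t).smul_const v).const_sub x
  have hγcont : Continuous (fun t : ℝ => x - t • v) :=
    continuous_const.sub (continuous_id.smul continuous_const)
  -- Gronwall bound on F t = ∇g(x - t v) - ∇g(x)
  set F : ℝ → EuclideanSpace ℝ (Fin d) := fun t => gradient g (x - t • v) - u with hFdef
  set F' : ℝ → EuclideanSpace ℝ (Fin d) :=
    fun t => -(fderiv ℝ (gradient g) (x - t • v)) v with hF'def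
  have hF't : ∀ t : ℝ, HasDerivAt F (F' t) t := by
    intro t
    have h1 := ((hgdiff (x - t • v)).hasFDerivAt.comp_hasDerivAt t (hγ t)).sub_const u
    simpa [hFdef, hF'def, map_neg] using h1
  have hFcont : Continuous F := (hgcont.comp hγcont).sub continuous_const
  have hgron : ∀ t ∈ Icc (0:ℝ) 1, ‖F t‖ ≤ gronwallBound 0 K ε (t - 0) := by
    apply norm_le_gronwallBound_of_norm_deriv_right_le hFcont.continuousOn
      (fun t _ => (hF't t).hasDerivWithinAt)
    · simp [hFdef, hu]
    · intro t _
      have hD := hsmooth (x - t • v)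
      have hDop := (fderiv ℝ (gradient g) (x - t • v)).le_opNorm v
      have hnorm : ‖gradient g (x - t • v)‖ ≤ ‖F t‖ + G := by
        have h : gradient g (x - t • v) = F t + u := by simp [hFdef]
        rw [h]; exact norm_add_le _ _
      have h2 : ‖F' t‖ ≤ (L0 + L1 * (‖F t‖ + G)) * (G / M) := by
        rw [hF'def, norm_neg]
        calc ‖(fderiv ℝ (gradient g) (x - t • v)) v‖
            ≤ ‖fderiv ℝ (gradient g) (x - t • v)‖ * ‖v‖ := hDop
          _ ≤ (L0 + L1 * (‖F t‖ + G)) * (G / M) := by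
              rw [hv]
              apply mul_le_mul _ le_rfl (by positivity) (by positivity)
              nlinarith [norm_nonneg (F t)]
      refine h2.trans (le_of_eq ?_)
      rw [hKdef, hεdef]
      field_simp
      ring
  -- consequence : ‖F t‖ ≤ G * t on [0,1]
  have hFle : ∀ t ∈ Icc (0:ℝ) 1, ‖F t‖ ≤ G * t := by
    intro t ht
    have h1 := hgron t ht
    rw [gronwallBound_of_K_ne_0 (ne_of_gt hK)] at h1
    simp only [zero_mul, zero_add, sub_zero] at h1
    -- exp (K*t) ≤ 1 - t + t * exp K  (convexity)
    have hconv := convexOn_exp.2 (mem_univ (0:ℝ)) (mem_univ K)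
      (by linarith [ht.2] : (0:ℝ) ≤ 1 - t) ht.1 (by ring)
    simp only [smul_eq_mul, mul_zero, add_zero, zero_add, Real.exp_zero, mul_one] at hconv
    rw [mul_comm t K] at hconv
    refine h1.trans ?_
    rw [hεK, div_mul_eq_mul_div, div_le_iff₀ hK]
    exact key_ineq hG.le hK hK1 ht.1 hconv
  -- descent along the path
  set ψ : ℝ → ℝ := fun t => -(inner ℝ (gradient g (x - t • v)) v : ℝ) with hψdef
  have hψt : ∀ t : ℝ, HasDerivAt (fun s : ℝ => g (x - s • v)) (ψ t) t := by
    intro t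
    have h1 := (hdiff (x - t • v)).hasFDerivAt.comp_hasDerivAt t (hγ t)
    have h2 : (fderiv ℝ g (x - t • v)) (-v) = ψ t := by
      rw [map_neg, hkey, hψdef]
    rwa [h2] at h1
  have hψcont : Continuous ψ :=
    ((hgcont.comp hγcont).inner continuous_const).neg
  have hFTC : g (x - (1:ℝ) • v) - g (x - (0:ℝ) • v) = ∫ t in (0:ℝ)..1, ψ t :=
    (integral_eq_sub_of_hasDerivAt (fun t _ => hψt t)
      (hψcont.intervalIntegrable 0 1)).symm
  -- pointwise bound on ψ
  have hψle : ∀ t ∈ Icc (0:ℝ) 1, ψ t ≤ -(G^2/M) + (G^2/M) * t := by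
    intro t ht
    have hsplit : gradient g (x - t • v) = F t + u := by simp [hFdef]
    have h1 : ψ t = -(inner ℝ (F t) v : ℝ) - (inner ℝ u v : ℝ) := by
      simp only [hψdef, hsplit, inner_add_left]; ring
    have h2 : (inner ℝ u v : ℝ) = M⁻¹ * G^2 := by
      rw [hvdef, real_inner_smul_right, real_inner_self_eq_norm_sq]
    have h3 : -(inner ℝ (F t) v : ℝ) ≤ ‖F t‖ * ‖v‖ := by
      have := real_inner_le_norm (-(F t)) v
      simpa using this
    have h4 : ‖F t‖ * ‖v‖ ≤ G * t * (G / M) := by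
      rw [hv]
      exact mul_le_mul_of_nonneg_right (hFle t ht) (by positivity)
    have h5 : G * t * (G / M) = G^2/M * t := by ring
    rw [h1, h2, inv_mul_eq_div]
    linarith [h3.trans (h4.trans_eq h5)]
  -- integrate the bound
  have hintle : (∫ t in (0:ℝ)..1, ψ t) ≤ ∫ t in (0:ℝ)..1, (-(G^2/M) + (G^2/M) * t) := by
    apply integral_mono_on (by norm_num) (hψcont.intervalIntegrable 0 1)
      ((continuous_const.add (continuous_const.mul continuous_id)).intervalIntegrable 0 1)
    exact hψle
  have hintval : (∫ t in (0:ℝ)..1, (-(G^2/M) + (G^2/M) * t)) = -(G^2/(2*M)) := by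
    have hc : IntervalIntegrable (fun t : ℝ => G^2/M * t) MeasureTheory.volume 0 1 :=
      (continuous_const.mul continuous_id).intervalIntegrable 0 1
    rw [integral_add intervalIntegrable_const hc, integral_const_mul, integral_id, integral_const]
    simp only [smul_eq_mul, sub_zero, one_mul]
    have hpos : (0:ℝ) < G * L1 * 2 + L0 := by positivity
    field_simp
    ring
  have hdesc : g (x - (1:ℝ) • v) ≤ g x - G^2/(2*M) := by
    have h0 : g (x - (0:ℝ) • v) = g x := by simp
    rw [h0] at hFTC
    linarith [hintle, hintval]
  have hinf2 : sInf (Set.range g) ≤ g (x - (1:ℝ) • v) := csInf_le hbdd ⟨_, rfl⟩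
  have hgap : G^2/(2*M) ≤ g x - sInf (Set.range g) := by linarith
  have h2M : (0:ℝ) < 2 * M := by linarith
  calc G ^ 2 = 2 * M * (G^2/(2*M)) := by field_simp
    _ ≤ 2 * M * (g x - sInf (Set.range g)) := mul_le_mul_of_nonneg_left hgap h2M.le
end

section
/- Let g: R^d -> R be (L_0, L_1)-smooth with lower bound f_* = inf g, and suppose g(x) - f_* ≤ Δ for some x and Δ ≥ 0. Define G = sup{u ≥ 0 : u² ≤ 2(L_0 + 2L_1 u)Δ}. Then G < ∞ and ||∇g(x)|| ≤ G. -/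
open Real Set

lemma log_lb {r : ℝ} (hr : 0 ≤ r) : 2*r/(2+r) ≤ Real.log (1+r) := by
  have key : MonotoneOn (fun s : ℝ => Real.log (1+s) - 2*s/(2+s)) (Ici 0) := by
    have hd : ∀ s : ℝ, 0 ≤ s → HasDerivAt (fun s : ℝ => Real.log (1+s) - 2*s/(2+s))
        (1/(1+s) - (2*(2+s) - 2*s*1)/(2+s)^2) s := by
      intro s hs
      have h1 : HasDerivAt (fun s : ℝ => 1 + s) 1 s := (hasDerivAt_id s).const_add 1
      have hlog : HasDerivAt (fun s : ℝ => Real.log (1+s)) (1/(1+s)) s := by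
        simpa using h1.log (by linarith)
      have hnum : HasDerivAt (fun s : ℝ => 2*s) 2 s := by
        simpa using (hasDerivAt_id s).const_mul (2:ℝ)
      have hden : HasDerivAt (fun s : ℝ => 2+s) 1 s := (hasDerivAt_id s).const_add 2
      exact hlog.sub (hnum.div hden (by linarith))
    apply monotoneOn_of_deriv_nonneg (convex_Ici 0)
    · exact fun s hs => ((hd s hs).differentiableAt).continuousAt.continuousWithinAt
    · intro s hs
      rw [interior_Ici] at hs
      exact ((hd s (le_of_lt hs)).differentiableAt).differentiableWithinAt
    · intro s hs
      rw [interior_Ici] at hs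
      have hs' : 0 < s := hs
      rw [(hd s hs.le).deriv]
      have h1 : (0:ℝ) < 1 + s := by linarith
      have h2 : (0:ℝ) < 2 + s := by linarith
      rw [div_sub_div _ _ (ne_of_gt h1) (by positivity), le_div_iff₀ (by positivity)]
      ring_nf
      nlinarith [sq_nonneg s]
  have := key (self_mem_Ici) (show r ∈ Ici (0:ℝ) from hr) hr
  simp only at this
  norm_num at this
  linarith

lemma key_log {r : ℝ} (hr : 0 ≤ r) : r^2/(2*(1+r)) ≤ (1+r) * Real.log (1+r) - r := by
  have h := log_lb hr
  have h1 : (0:ℝ) < 1 + r := by linarith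
  have h2 : (0:ℝ) < 2 + r := by linarith
  have h3 : (1+r) * (2*r/(2+r)) - r ≤ (1+r) * Real.log (1+r) - r := by
    have := mul_le_mul_of_nonneg_left h (le_of_lt h1); linarith
  refine le_trans ?_ h3
  rw [div_le_iff₀ (by positivity)]
  field_simp
  nlinarith [sq_nonneg r, mul_nonneg (mul_nonneg hr hr) hr]

set_option maxHeartbeats 1000000 in
/-- Bound on the gradient norm in terms of the sub-optimality gap for
`(L0, L1)`-smooth functions. -/
theorem stmt_5 {d : ℕ} (g : EuclideanSpace ℝ (Fin d) → ℝ)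
    (L0 L1 : ℝ) (hL0 : 0 < L0) (hL1 : 0 < L1)
    (hC2 : ContDiff ℝ 2 g)
    (hsmooth : ∀ θ, ‖fderiv ℝ (gradient g) θ‖ ≤ L0 + L1 * ‖gradient g θ‖)
    (hbdd : BddBelow (Set.range g))
    (x : EuclideanSpace ℝ (Fin d)) (Δ : ℝ) (hΔ : 0 ≤ Δ)
    (hgap : g x - sInf (Set.range g) ≤ Δ) :
    BddAbove {u : ℝ | 0 ≤ u ∧ u ^ 2 ≤ 2 * (L0 + 2 * L1 * u) * Δ} ∧
      ‖gradient g x‖ ≤ sSup {u : ℝ | 0 ≤ u ∧ u ^ 2 ≤ 2 * (L0 + 2 * L1 * u) * Δ} := by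
  have hbddS : BddAbove {u : ℝ | 0 ≤ u ∧ u ^ 2 ≤ 2 * (L0 + 2 * L1 * u) * Δ} := by
    refine ⟨4*L1*Δ + Real.sqrt (2*L0*Δ), ?_⟩
    rintro u ⟨hu0, hu⟩
    by_contra h
    push_neg at h
    have hsq : Real.sqrt (2*L0*Δ) ^ 2 = 2*L0*Δ := Real.sq_sqrt (by positivity)
    have h2 := Real.sqrt_nonneg (2*L0*Δ)
    nlinarith [mul_nonneg hL1.le hΔ]
  refine ⟨hbddS, ?_⟩
  have key : ‖gradient g x‖ ^ 2 ≤ 2 * (L0 + 2 * L1 * ‖gradient g x‖) * Δ := by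
    rcases eq_or_lt_of_le (norm_nonneg (gradient g x)) with h0 | hupos
    · rw [← h0]
      norm_num
      positivity
    set u : ℝ := ‖gradient g x‖ with hu_def
    have hune : u ≠ 0 := ne_of_gt hupos
    -- differentiability of the gradient
    have hgC1 : ContDiff ℝ 1 (gradient g) := by
      have heq : gradient g = fun y => (InnerProductSpace.toDual ℝ (EuclideanSpace ℝ (Fin d))).symm (fderiv ℝ g y) := rfl
      rw [heq]
      exact ((InnerProductSpace.toDual ℝ (EuclideanSpace ℝ (Fin d))).symm.contDiff).comp
        (hC2.fderiv_right (by norm_num))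
    have hgdiff : Differentiable ℝ (gradient g) := hgC1.differentiable (by norm_num)
    have hgdifff : Differentiable ℝ g := hC2.differentiable (by norm_num)
    set v : EuclideanSpace ℝ (Fin d) := u⁻¹ • gradient g x with hv_def
    have hvnorm : ‖v‖ = 1 := by
      rw [hv_def, norm_smul, norm_inv, Real.norm_of_nonneg (norm_nonneg _), ← hu_def,
        inv_mul_cancel₀ hune]
    set c : ℝ → EuclideanSpace ℝ (Fin d) := fun t => x - t • v with hc_def
    have hc : ∀ t : ℝ, HasDerivAt c (-v) t := by
      intro t
      simpa using ((hasDerivAt_id t).smul_const v).const_sub x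
    set f : ℝ → EuclideanSpace ℝ (Fin d) := fun t => gradient g (c t) with hf_def
    have hf : ∀ t : ℝ, HasDerivAt f ((fderiv ℝ (gradient g) (c t)) (-v)) t :=
      fun t => ((hgdiff (c t)).hasFDerivAt).comp_hasDerivAt t (hc t)
    have hf0 : f 0 = gradient g x := by simp [hf_def, hc_def]
    have hf0norm : ‖f 0‖ = u := by rw [hf0]
    set F : ℝ → EuclideanSpace ℝ (Fin d) := fun t => f t - f 0 with hF_def
    have hF : ∀ t : ℝ, HasDerivAt F ((fderiv ℝ (gradient g) (c t)) (-v)) t :=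
      fun t => (hf t).sub_const (f 0)
    set A : ℝ := u + L0 / L1 with hA_def
    have hApos : 0 < A := by positivity
    set r : ℝ := u / A with hr_def
    have hr0 : 0 ≤ r := by positivity
    have hu_eq : u = r * A := by rw [hr_def]; field_simp
    set T : ℝ := Real.log (1 + r) / L1 with hT_def
    have h1r : (0:ℝ) < 1 + r := by linarith
    have hT0 : 0 ≤ T := by
      apply div_nonneg _ hL1.le
      exact Real.log_nonneg (by linarith)
    have hexpT : Real.exp (L1 * T) = 1 + r := by
      rw [hT_def, mul_div_cancel₀ _ hL1.ne', Real.exp_log h1r]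
    clear_value u A r T v
    -- Grönwall
    have grb : ∀ t ∈ Icc (0:ℝ) T, ‖F t‖ ≤ A * (Real.exp (L1 * t) - 1) := by
      have main := norm_le_gronwallBound_of_norm_deriv_right_le (a := 0) (b := T)
        (f := F) (f' := fun t => (fderiv ℝ (gradient g) (c t)) (-v))
        (δ := 0) (K := L1) (ε := L0 + L1 * u)
        (fun t _ => (hF t).continuousAt.continuousWithinAt)
        (fun t _ => (hF t).hasDerivWithinAt)
        (by simp [hF_def])
        (by
          intro t _
          show ‖(fderiv ℝ (gradient g) (c t)) (-v)‖ ≤ L1 * ‖F t‖ + (L0 + L1 * u)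
          have h1 : ‖(fderiv ℝ (gradient g) (c t)) (-v)‖ ≤ ‖fderiv ℝ (gradient g) (c t)‖ := by
            calc ‖(fderiv ℝ (gradient g) (c t)) (-v)‖
                ≤ ‖fderiv ℝ (gradient g) (c t)‖ * ‖-v‖ := ContinuousLinearMap.le_opNorm _ _
              _ = ‖fderiv ℝ (gradient g) (c t)‖ := by rw [norm_neg, hvnorm, mul_one]
          have h2 := hsmooth (c t)
          have h3 : ‖f t‖ ≤ ‖F t‖ + u := by
            calc ‖f t‖ = ‖F t + f 0‖ := by simp [hF_def]
              _ ≤ ‖F t‖ + ‖f 0‖ := norm_add_le _ _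
              _ = ‖F t‖ + u := by rw [hf0norm]
          have h4 : ‖gradient g (c t)‖ = ‖f t‖ := rfl
          nlinarith)
      intro t ht
      have h := main t ht
      rw [gronwallBound_of_K_ne_0 hL1.ne', sub_zero] at h
      have hAe : (L0 + L1 * u) / L1 = A := by
        rw [hA_def]; field_simp; ring
      simp only [zero_mul, zero_add, hAe] at h
      exact h
    -- inner product lower bound
    have hinner0 : (inner ℝ (f 0) v : ℝ) = u := by
      rw [hf0, hv_def, real_inner_smul_right, real_inner_self_eq_norm_sq, ← hu_def]
      field_simp
    have hinner : ∀ t ∈ Icc (0:ℝ) T, u + A - A * Real.exp (L1 * t) ≤ (inner ℝ (f t) v : ℝ) := by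
      intro t ht
      have h1 : (inner ℝ (f t) v : ℝ) = inner ℝ (f 0) v + inner ℝ (F t) v := by
        have : F t = f t - f 0 := rfl
        rw [this, inner_sub_left]
        ring
      have h2 : -(‖F t‖) ≤ (inner ℝ (F t) v : ℝ) := by
        have h3 := real_inner_le_norm (-(F t)) v
        rw [inner_neg_left, norm_neg, hvnorm, mul_one] at h3
        linarith
      have h4 := grb t ht
      rw [h1, hinner0]
      linarith
    -- the comparison function
    have hfg : ∀ (y w : EuclideanSpace ℝ (Fin d)), (fderiv ℝ g y) w = (inner ℝ (gradient g y) w : ℝ) :=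
      fun y w => (InnerProductSpace.toDual_symm_apply).symm
    set Φ : ℝ → ℝ := fun t => g (c t) + (u + A) * t - (A / L1) * (Real.exp (L1 * t) - 1)
      with hΦ_def
    have hΦd : ∀ t : ℝ, HasDerivAt Φ
        ((inner ℝ (f t) (-v) : ℝ) + (u + A) - (A / L1) * (Real.exp (L1 * t) * L1)) t := by
      intro t
      have h1 : HasDerivAt (fun t => g (c t)) ((fderiv ℝ g (c t)) (-v)) t :=
        ((hgdifff (c t)).hasFDerivAt).comp_hasDerivAt t (hc t)
      rw [hfg] at h1
      have h2 : HasDerivAt (fun t : ℝ => (u + A) * t) (u + A) t := by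
        simpa using (hasDerivAt_id t).const_mul (u + A)
      have h3 : HasDerivAt (fun t : ℝ => (A / L1) * (Real.exp (L1 * t) - 1))
          ((A / L1) * (Real.exp (L1 * t) * L1)) t := by
        have he : HasDerivAt (fun t : ℝ => Real.exp (L1 * t)) (Real.exp (L1 * t) * L1) t := by
          simpa using (((hasDerivAt_id t).const_mul L1).exp)
        simpa using ((he.sub_const 1).const_mul (A / L1))
      exact (h1.add h2).sub h3
    have hΦanti : AntitoneOn Φ (Icc 0 T) := by
      apply antitoneOn_of_deriv_nonpos (convex_Icc 0 T)
      · exact fun t _ => (hΦd t).continuousAt.continuousWithinAt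
      · intro t ht
        rw [interior_Icc] at ht
        exact (hΦd t).differentiableAt.differentiableWithinAt
      · intro t ht
        rw [interior_Icc] at ht
        rw [(hΦd t).deriv]
        have h5 := hinner t (Ioo_subset_Icc_self ht)
        have h6 : (inner ℝ (f t) (-v) : ℝ) = -(inner ℝ (f t) v : ℝ) := by
          rw [inner_neg_right]
        rw [h6]
        have h7 : (A / L1) * (Real.exp (L1 * t) * L1) = A * Real.exp (L1 * t) := by
          field_simp
        rw [h7]
        linarith
    -- conclude the gap bound
    have hΦT := hΦanti (left_mem_Icc.2 hT0) (right_mem_Icc.2 hT0) hT0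
    have hΦ0 : Φ 0 = g x := by
      simp [hΦ_def, hc_def]
    have hinfle : sInf (Set.range g) ≤ g (c T) := csInf_le hbdd ⟨c T, rfl⟩
    have hgap2 : (u + A) * T - (A / L1) * (Real.exp (L1 * T) - 1) ≤ Δ := by
      have : Φ T ≤ g x := by rw [← hΦ0]; exact hΦT
      rw [hΦ_def] at this
      simp only at this
      linarith
    -- final algebra
    have hq : (A / L1) * (r ^ 2 / (2 * (1 + r))) ≤ Δ := by
      have h1 := key_log hr0
      have h2 : (A / L1) * (r ^ 2 / (2 * (1 + r))) ≤ (A / L1) * ((1 + r) * Real.log (1 + r) - r) :=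
        mul_le_mul_of_nonneg_left h1 (by positivity)
      have h3 : (A / L1) * ((1 + r) * Real.log (1 + r) - r)
          = (u + A) * T - (A / L1) * (Real.exp (L1 * T) - 1) := by
        rw [hexpT, hT_def, hu_eq]
        field_simp
        ring
      linarith
    have hq' : A * r ^ 2 ≤ 2 * L1 * (1 + r) * Δ := by
      have h := mul_le_mul_of_nonneg_left hq (show (0:ℝ) ≤ 2 * L1 * (1 + r) by positivity)
      calc A * r ^ 2 = 2 * L1 * (1 + r) * ((A / L1) * (r ^ 2 / (2 * (1 + r)))) := by
            field_simp
        _ ≤ 2 * L1 * (1 + r) * Δ := h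
    have hL0sum : L0 + 2 * L1 * u = L1 * A * (1 + r) := by
      have h1 : L1 * (L0 / L1) = L0 := by field_simp
      calc L0 + 2 * L1 * u = L1 * (L0 / L1) + L1 * u + L1 * u := by rw [h1]; ring
        _ = L1 * A + L1 * (r * A) := by rw [← hu_eq, hA_def]; ring
        _ = L1 * A * (1 + r) := by ring
    calc u ^ 2 = A * (A * r ^ 2) := by rw [hu_eq]; ring
      _ ≤ A * (2 * L1 * (1 + r) * Δ) := mul_le_mul_of_nonneg_left hq' hApos.le
      _ = 2 * (L0 + 2 * L1 * u) * Δ := by rw [hL0sum]; ring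
  exact le_csSup hbddS ⟨norm_nonneg _, key⟩
end

section
/- Let g: R^d -> R be (L_0, L_1)-smooth and let c > 0. For any θ, ϑ ∈ R^d with ||θ - ϑ|| ≤ c/L_1, it holds that g(θ) ≤ g(ϑ) + ⟨∇g(ϑ), θ - ϑ⟩ + ((A L_0 + B L_1 ||∇g(ϑ)||)/2)·||θ - ϑ||², where A = 1 + e^c - (e^c - 1)/c and B = (e^c - 1)/c. -/
lemma auxF (x : ℝ) (hx : 0 ≤ x) : 0 ≤ x * Real.exp x + x - 2 * Real.exp x + 2 := by
  have key : ∀ y : ℝ, HasDerivAt (fun t => t * Real.exp t + t - 2 * Real.exp t + 2)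
      (y * Real.exp y - Real.exp y + 1) y := by
    intro y
    have h1 : HasDerivAt (fun t : ℝ => t * Real.exp t + t - 2 * Real.exp t + 2)
        (1 * Real.exp y + id y * Real.exp y + 1 - 2 * Real.exp y) y := by
      exact (((hasDerivAt_id y).mul (Real.hasDerivAt_exp y)).add (hasDerivAt_id y)).sub
        ((Real.hasDerivAt_exp y).const_mul 2) |>.add_const 2
    convert h1 using 1; simp [id]; ring
  have mono : MonotoneOn (fun t => t * Real.exp t + t - 2 * Real.exp t + 2) (Set.Ici 0) := by
    apply monotoneOn_of_deriv_nonneg (convex_Ici 0)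
    · exact fun y _ => (key y).differentiableAt.continuousAt.continuousWithinAt
    · exact fun y _ => (key y).differentiableAt.differentiableWithinAt
    · intro y _
      rw [(key y).deriv]
      have h1 : (1 - y) * Real.exp y ≤ Real.exp (-y) * Real.exp y :=
        mul_le_mul_of_nonneg_right (by linarith [Real.add_one_le_exp (-y)]) (Real.exp_pos y).le
      have h2 : Real.exp (-y) * Real.exp y = 1 := by rw [← Real.exp_add]; simp
      nlinarith
  have h0 := mono (Set.self_mem_Ici) hx hx
  simpa using h0

set_option maxHeartbeats 1000000 in
/-- Generalized descent lemma for `(L0, L1)`-smooth functions. -/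
theorem stmt_6 {d : ℕ} (g : EuclideanSpace ℝ (Fin d) → ℝ)
    (L0 L1 : ℝ) (hL0 : 0 < L0) (hL1 : 0 < L1)
    (hC2 : ContDiff ℝ 2 g)
    (hsmooth : ∀ θ, ‖fderiv ℝ (gradient g) θ‖ ≤ L0 + L1 * ‖gradient g θ‖)
    (c : ℝ) (hc : 0 < c)
    (θ ϑ : EuclideanSpace ℝ (Fin d)) (hdist : ‖θ - ϑ‖ ≤ c / L1)
    (A B : ℝ)
    (hA : A = 1 + Real.exp c - (Real.exp c - 1) / c)
    (hB : B = (Real.exp c - 1) / c) :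
    g θ ≤ g ϑ + (inner ℝ (gradient g ϑ) (θ - ϑ) : ℝ) +
      ((A * L0 + B * L1 * ‖gradient g ϑ‖) / 2) * ‖θ - ϑ‖ ^ 2 := by
  set u : EuclideanSpace ℝ (Fin d) := θ - ϑ with hu
  set r : ℝ := ‖u‖ with hr
  set G : ℝ := ‖gradient g ϑ‖ with hG
  have hr0 : 0 ≤ r := norm_nonneg u
  have hG0 : 0 ≤ G := norm_nonneg _
  -- smoothness of the gradient
  have hgc : ContDiff ℝ 1 (gradient g) := by
    have h1 : ContDiff ℝ 1 (fderiv ℝ g) := hC2.fderiv_right (by norm_num)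
    have h2 : gradient g = fun x => (InnerProductSpace.toDual ℝ (EuclideanSpace ℝ (Fin d))).symm (fderiv ℝ g x) := rfl
    rw [h2]
    exact (InnerProductSpace.toDual ℝ (EuclideanSpace ℝ (Fin d))).symm.contDiff.comp h1
  have hgdiff : Differentiable ℝ (gradient g) := hgc.differentiable one_ne_zero
  have hgdiffg : Differentiable ℝ g := hC2.differentiable two_ne_zero
  -- the curve
  set γ : ℝ → (EuclideanSpace ℝ (Fin d)) := fun t => ϑ + t • u with hγdef
  have hγ : ∀ t : ℝ, HasDerivAt γ u t := by
    intro t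
    have : HasDerivAt (fun s : ℝ => ϑ + s • u) ((1:ℝ) • u) t :=
      ((hasDerivAt_id t).smul_const u).const_add ϑ
    simpa only [one_smul] using this
  have hγcont : Continuous γ := by fun_prop
  -- fderiv g in terms of gradient
  have hfd : ∀ x : EuclideanSpace ℝ (Fin d), fderiv ℝ g x = (InnerProductSpace.toDual ℝ (EuclideanSpace ℝ (Fin d))) (gradient g x) := by
    intro x
    have h := (hgdiffg x).hasGradientAt
    rw [hasGradientAt_iff_hasFDerivAt] at h
    exact h.fderiv
  -- ψ = gradient difference along the curve
  set ψ : ℝ → (EuclideanSpace ℝ (Fin d)) := fun t => gradient g (γ t) - gradient g ϑ with hψdef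
  set ψ' : ℝ → (EuclideanSpace ℝ (Fin d)) := fun t => (fderiv ℝ (gradient g) (γ t)) u with hψ'def
  have hψ : ∀ t : ℝ, HasDerivAt ψ (ψ' t) t := by
    intro t
    exact ((hgdiff (γ t)).hasFDerivAt.comp_hasDerivAt t (hγ t)).sub_const _
  set M : ℝ := (L0 + L1 * G) * r with hM
  have hrc : L1 * r ≤ c := by
    have h := (le_div_iff₀ hL1).mp hdist
    have h2 : L1 * r = r * L1 := mul_comm _ _
    linarith
  have bnd : ∀ t ∈ Set.Ico (0:ℝ) 1, ‖ψ' t‖ ≤ c * ‖ψ t‖ + M := by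
    intro t _
    have h1 : ‖ψ' t‖ ≤ ‖fderiv ℝ (gradient g) (γ t)‖ * r :=
      (fderiv ℝ (gradient g) (γ t)).le_opNorm u
    have h2 : ‖fderiv ℝ (gradient g) (γ t)‖ ≤ L0 + L1 * ‖gradient g (γ t)‖ := hsmooth (γ t)
    have h3 : ‖gradient g (γ t)‖ ≤ ‖ψ t‖ + G := by
      have : gradient g (γ t) = ψ t + gradient g ϑ := by simp [hψdef]
      rw [this]; exact norm_add_le _ _
    have h4 : ‖fderiv ℝ (gradient g) (γ t)‖ * r ≤ (L0 + L1 * (‖ψ t‖ + G)) * r := by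
      apply mul_le_mul_of_nonneg_right _ hr0
      nlinarith
    have h5 : L1 * r * ‖ψ t‖ ≤ c * ‖ψ t‖ :=
      mul_le_mul_of_nonneg_right hrc (norm_nonneg _)
    nlinarith
  have hψ0 : ψ 0 = 0 := by simp [hψdef, hγdef]
  have hgron : ∀ t ∈ Set.Icc (0:ℝ) 1, ‖ψ t‖ ≤ M / c * (Real.exp (c * t) - 1) := by
    intro t ht
    have h := norm_le_gronwallBound_of_norm_deriv_right_le
      (f := ψ) (f' := ψ') (δ := 0) (K := c) (ε := M) (a := 0) (b := 1)
      (fun x _ => (hψ x).continuousAt.continuousWithinAt)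
      (fun x _ => (hψ x).hasDerivWithinAt)
      (by simp [hψ0]) bnd t ht
    rw [gronwallBound_of_K_ne_0 hc.ne'] at h
    simpa using h
  -- FTC
  have hφ : ∀ t ∈ Set.uIcc (0:ℝ) 1,
      HasDerivAt (fun s => g (γ s)) ((inner ℝ (gradient g (γ t)) u : ℝ)) t := by
    intro t _
    have h := (hgdiffg (γ t)).hasFDerivAt.comp_hasDerivAt t (hγ t)
    have h2 : (fderiv ℝ g (γ t)) u = (inner ℝ (gradient g (γ t)) u : ℝ) := by
      rw [hfd (γ t)]; simp [InnerProductSpace.toDual_apply_apply]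
    rwa [h2] at h
  have hcont1 : Continuous fun t : ℝ => (inner ℝ (gradient g (γ t)) u : ℝ) :=
    (hgc.continuous.comp hγcont).inner continuous_const
  have hFTC : ∫ t in (0:ℝ)..1, (inner ℝ (gradient g (γ t)) u : ℝ) = g (γ 1) - g (γ 0) :=
    intervalIntegral.integral_eq_sub_of_hasDerivAt hφ (hcont1.intervalIntegrable 0 1)
  have hγ1 : γ 1 = θ := by simp [hγdef, hu]
  have hγ0 : γ 0 = ϑ := by simp [hγdef]
  -- split integrand
  have hsplit : ∀ t : ℝ, (inner ℝ (gradient g (γ t)) u : ℝ)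
      = (inner ℝ (gradient g ϑ) u : ℝ) + (inner ℝ (ψ t) u : ℝ) := by
    intro t
    simp [hψdef, inner_sub_left]
  -- bound the remainder integral
  have hptw : ∀ t ∈ Set.Icc (0:ℝ) 1,
      (inner ℝ (ψ t) u : ℝ) ≤ M / c * (Real.exp (c * t) - 1) * r := by
    intro t ht
    calc (inner ℝ (ψ t) u : ℝ) ≤ ‖ψ t‖ * ‖u‖ := real_inner_le_norm _ _
      _ ≤ M / c * (Real.exp (c * t) - 1) * r :=
        mul_le_mul_of_nonneg_right (hgron t ht) hr0
  have hcont2 : Continuous fun t : ℝ => (inner ℝ (ψ t) u : ℝ) := by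
    apply Continuous.inner _ continuous_const
    exact (hgc.continuous.comp hγcont).sub continuous_const
  have hcont3 : Continuous fun t : ℝ => M / c * (Real.exp (c * t) - 1) * r := by fun_prop
  have hImono : ∫ t in (0:ℝ)..1, (inner ℝ (ψ t) u : ℝ)
      ≤ ∫ t in (0:ℝ)..1, M / c * (Real.exp (c * t) - 1) * r :=
    intervalIntegral.integral_mono_on zero_le_one (hcont2.intervalIntegrable 0 1)
      (hcont3.intervalIntegrable 0 1) hptw
  -- compute the RHS integral
  have hIval : ∫ t in (0:ℝ)..1, M / c * (Real.exp (c * t) - 1) * r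
      = M / c * (Real.exp c / c - 1 - (1 / c - 0)) * r := by
    have hAnti : ∀ t ∈ Set.uIcc (0:ℝ) 1,
        HasDerivAt (fun s => M / c * (Real.exp (c * s) / c - s) * r)
          (M / c * (Real.exp (c * t) - 1) * r) t := by
      intro t _
      have he : HasDerivAt (fun s : ℝ => Real.exp (c * s)) (Real.exp (c * t) * c) t := by
        simpa using ((hasDerivAt_id t).const_mul c).exp
      have h2 : HasDerivAt (fun s : ℝ => M / c * (Real.exp (c * s) / c - s) * r)
          (M / c * (Real.exp (c * t) * c / c - 1) * r) t :=
        (((he.div_const c).sub (hasDerivAt_id t)).const_mul (M / c)).mul_const r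
      have h3 : Real.exp (c * t) * c / c = Real.exp (c * t) := by
        field_simp
      rwa [h3] at h2
    have := intervalIntegral.integral_eq_sub_of_hasDerivAt hAnti (hcont3.intervalIntegrable 0 1)
    rw [this]
    simp only [mul_one, mul_zero, Real.exp_zero]
    ring
  -- assemble
  have hGmain : g θ = g ϑ + (inner ℝ (gradient g ϑ) u : ℝ)
      + ∫ t in (0:ℝ)..1, (inner ℝ (ψ t) u : ℝ) := by
    have h1 : ∫ t in (0:ℝ)..1, (inner ℝ (gradient g (γ t)) u : ℝ)
        = ∫ t in (0:ℝ)..1, ((inner ℝ (gradient g ϑ) u : ℝ) + (inner ℝ (ψ t) u : ℝ)) := by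
      congr 1; ext t; exact hsplit t
    have h2 : ∫ t in (0:ℝ)..1, ((inner ℝ (gradient g ϑ) u : ℝ) + (inner ℝ (ψ t) u : ℝ))
        = (inner ℝ (gradient g ϑ) u : ℝ) + ∫ t in (0:ℝ)..1, (inner ℝ (ψ t) u : ℝ) := by
      rw [intervalIntegral.integral_add (intervalIntegrable_const) (hcont2.intervalIntegrable 0 1)]
      simp
    rw [h1, h2] at hFTC
    rw [hγ1, hγ0] at hFTC
    linarith
  -- final coefficient inequality
  have hF := auxF c hc.le
  have hEc := Real.add_one_le_exp c
  have hcoef : (L0 + L1 * G) * ((Real.exp c - 1 - c) / c ^ 2) ≤ (A * L0 + B * L1 * G) / 2 := by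
    rw [hA, hB, ← sub_nonneg]
    have expand : ((1 + Real.exp c - (Real.exp c - 1) / c) * L0 + (Real.exp c - 1) / c * L1 * G) / 2
        - (L0 + L1 * G) * ((Real.exp c - 1 - c) / c ^ 2)
        = ((c ^ 2 * (1 + Real.exp c) - c * (Real.exp c - 1)) * L0 + c * (Real.exp c - 1) * L1 * G
            - 2 * (L0 + L1 * G) * (Real.exp c - 1 - c)) / (2 * c ^ 2) := by
      field_simp
    rw [expand]
    apply div_nonneg _ (by positivity)
    nlinarith [mul_nonneg (mul_nonneg hF hc.le) hL0.le, mul_nonneg hF hL0.le,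
      mul_nonneg hF (mul_nonneg hL1.le hG0), mul_nonneg (mul_nonneg hF hc.le) (mul_nonneg hL1.le hG0)]
  have heq : M / c * (Real.exp c / c - 1 - (1 / c - 0)) * r
      = (L0 + L1 * G) * ((Real.exp c - 1 - c) / c ^ 2) * r ^ 2 := by
    rw [hM]
    field_simp
    ring
  have hfin : M / c * (Real.exp c / c - 1 - (1 / c - 0)) * r
      ≤ (A * L0 + B * L1 * G) / 2 * r ^ 2 := by
    rw [heq]
    exact mul_le_mul_of_nonneg_right hcoef (sq_nonneg r)
  rw [hGmain]
  have := le_trans hImono (le_of_eq hIval)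
  linarith [le_trans this hfin]
end

section
/- Let g: R^d -> R be (L_0, L_1)-smooth and let c > 0. For any θ, ϑ ∈ R^d with ||θ - ϑ|| ≤ c/L_1, it holds that ||∇g(θ) - ∇g(ϑ)|| ≤ (A L_0 + B L_1 ||∇g(ϑ)||)·||θ - ϑ||, where A = 1 + e^c - (e^c - 1)/c and B = (e^c - 1)/c. -/
open Real Set


private lemma aux_key (c : ℝ) (hc : 0 < c) :
    2 * (Real.exp c - 1) ≤ c * (1 + Real.exp c) := by
  set h : ℝ → ℝ := fun x => x * (1 + Real.exp x) - 2 * (Real.exp x - 1) with hh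
  have hd : ∀ x : ℝ, HasDerivAt h (1 + (x - 1) * Real.exp x) x := by
    intro x
    have h1 : HasDerivAt (fun x : ℝ => x * (1 + Real.exp x))
        (1 * (1 + Real.exp x) + x * Real.exp x) x :=
      (hasDerivAt_id x).mul ((Real.hasDerivAt_exp x).const_add 1)
    have h2 : HasDerivAt (fun x : ℝ => 2 * (Real.exp x - 1)) (2 * Real.exp x) x :=
      ((Real.hasDerivAt_exp x).sub_const 1).const_mul 2
    have h3 := h1.sub h2
    exact h3.congr_deriv (by ring)
  have hmono : MonotoneOn h (Set.Ici (0:ℝ)) := by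
    apply monotoneOn_of_deriv_nonneg (convex_Ici 0)
      (fun x _ => (hd x).continuousAt.continuousWithinAt)
      (fun x _ => ((hd x).differentiableAt).differentiableWithinAt)
    intro x _
    rw [(hd x).deriv]
    have hex := Real.add_one_le_exp (-x)
    have hpos := Real.exp_pos x
    have hmul : Real.exp (-x) * Real.exp x = 1 := by
      rw [← Real.exp_add]; simp
    nlinarith
  have hkey := hmono (Set.self_mem_Ici) (Set.mem_Ici.mpr hc.le) hc.le
  simp only [hh, Real.exp_zero] at hkey
  linarith

private lemma aux_conv (c K : ℝ) (hc : 0 < c) (hK0 : 0 ≤ K) (hKc : K ≤ c) :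
    Real.exp K - 1 ≤ (K / c) * (Real.exp c - 1) := by
  have h01 : K / c ≤ 1 := div_le_one_of_le₀ hKc hc.le
  have h00 : 0 ≤ K / c := by positivity
  have h := convexOn_exp.2 (Set.mem_univ (0:ℝ)) (Set.mem_univ c)
    (by linarith : (0:ℝ) ≤ 1 - K / c) h00 (by ring)
  simp only [smul_eq_mul, Real.exp_zero, mul_one] at h
  have harg : (1 - K / c) * 0 + K / c * c = K := by field_simp; ring
  rw [harg] at h
  nlinarith

/-- Local Lipschitz-gradient bound for `(L0, L1)`-smooth functions. -/
theorem stmt_7 {d : ℕ} (g : EuclideanSpace ℝ (Fin d) → ℝ)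
    (L0 L1 : ℝ) (hL0 : 0 < L0) (hL1 : 0 < L1)
    (hC2 : ContDiff ℝ 2 g)
    (hsmooth : ∀ θ, ‖fderiv ℝ (gradient g) θ‖ ≤ L0 + L1 * ‖gradient g θ‖)
    (c : ℝ) (hc : 0 < c)
    (θ ϑ : EuclideanSpace ℝ (Fin d)) (hdist : ‖θ - ϑ‖ ≤ c / L1)
    (A B : ℝ)
    (hA : A = 1 + Real.exp c - (Real.exp c - 1) / c)
    (hB : B = (Real.exp c - 1) / c) :
    ‖gradient g θ - gradient g ϑ‖ ≤
      (A * L0 + B * L1 * ‖gradient g ϑ‖) * ‖θ - ϑ‖ := by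
  -- gradient is C¹
  have hgrad : ContDiff ℝ 1 (gradient g) := by
    have h1 : ContDiff ℝ 1 (fderiv ℝ g) := hC2.fderiv_right (by norm_num)
    have : gradient g = fun x => (InnerProductSpace.toDual ℝ _).symm (fderiv ℝ g x) := rfl
    rw [this]
    exact (InnerProductSpace.toDual ℝ _).symm.contDiff.comp h1
  have hdiff : Differentiable ℝ (gradient g) := hgrad.differentiable (by norm_num)
  set v := θ - ϑ with hv
  set r := ‖v‖ with hr
  have hr0 : 0 ≤ r := norm_nonneg v
  rcases eq_or_lt_of_le hr0 with hr0' | hrpos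
  · -- r = 0
    have : v = 0 := by
      rw [← norm_eq_zero]; exact hr0'.symm
    have hθϑ : θ = ϑ := by
      have := sub_eq_zero.mp this; exact this
    rw [← hr0']
    simp [hθϑ]
  -- main case r > 0
  set M := L0 + L1 * ‖gradient g ϑ‖ with hM
  have hMpos : 0 < M := by positivity
  set G : ℝ → EuclideanSpace ℝ (Fin d) :=
    fun t => gradient g (ϑ + t • v) - gradient g ϑ with hG
  have hline : ∀ t : ℝ, HasDerivAt (fun s : ℝ => ϑ + s • v) v t := by
    intro t
    simpa using ((hasDerivAt_id t).smul_const v).const_add ϑ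
  have hGderiv : ∀ t : ℝ,
      HasDerivAt G (fderiv ℝ (gradient g) (ϑ + t • v) v) t := by
    intro t
    have h1 := ((hdiff (ϑ + t • v)).hasFDerivAt).comp_hasDerivAt t (hline t)
    simpa [hG] using h1.sub_const (gradient g ϑ)
  have hGcont : ContinuousOn G (Icc (0:ℝ) 1) :=
    fun t _ => ((hGderiv t).continuousAt).continuousWithinAt
  have hG0 : ‖G 0‖ ≤ 0 := by simp [hG]
  set K := L1 * r with hK
  have hKpos : 0 < K := by positivity
  set ε := M * r with hε
  have hbound : ∀ t ∈ Ico (0:ℝ) 1,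
      ‖fderiv ℝ (gradient g) (ϑ + t • v) v‖ ≤ K * ‖G t‖ + ε := by
    intro t _
    calc ‖fderiv ℝ (gradient g) (ϑ + t • v) v‖
        ≤ ‖fderiv ℝ (gradient g) (ϑ + t • v)‖ * r :=
          (fderiv ℝ (gradient g) (ϑ + t • v)).le_opNorm v
      _ ≤ (L0 + L1 * ‖gradient g (ϑ + t • v)‖) * r := by
          apply mul_le_mul_of_nonneg_right (hsmooth _) hr0
      _ ≤ (L0 + L1 * (‖G t‖ + ‖gradient g ϑ‖)) * r := by
          apply mul_le_mul_of_nonneg_right _ hr0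
          have : ‖gradient g (ϑ + t • v)‖ ≤ ‖G t‖ + ‖gradient g ϑ‖ := by
            simpa [hG] using norm_sub_norm_le (gradient g (ϑ + t • v)) (gradient g ϑ) |>.trans
              (le_abs_self _) |>.trans (le_of_eq rfl)
          nlinarith [hL1.le]
      _ = K * ‖G t‖ + ε := by ring
  have hgron := norm_le_gronwallBound_of_norm_deriv_right_le hGcont
    (fun t _ => (hGderiv t).hasDerivWithinAt) hG0 hbound 1 (by norm_num)
  rw [gronwallBound_of_K_ne_0 hKpos.ne'] at hgron
  simp only [sub_zero, mul_one, zero_mul, zero_add] at hgron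
  -- hgron : ‖G 1‖ ≤ ε / K * (exp K - 1)
  have hG1 : G 1 = gradient g θ - gradient g ϑ := by
    simp [hG, hv]
  have hKc : K ≤ c := by
    have := hdist
    calc K = L1 * r := rfl
      _ ≤ L1 * (c / L1) := by
          apply mul_le_mul_of_nonneg_left _ hL1.le
          simpa [hr, hv] using hdist
      _ = c := by field_simp
  -- convexity bound : exp K - 1 ≤ (K / c) * (exp c - 1)
  have hconv : Real.exp K - 1 ≤ (K / c) * (Real.exp c - 1) :=
    aux_conv c K hc hKpos.le hKc
  have hεK : ε / K = M / L1 := by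
    rw [hε, hK]; field_simp
  have hstep : ‖gradient g θ - gradient g ϑ‖ ≤ B * M * r := by
    rw [← hG1]
    calc ‖G 1‖ ≤ ε / K * (Real.exp K - 1) := hgron
      _ ≤ ε / K * ((K / c) * (Real.exp c - 1)) := by
          apply mul_le_mul_of_nonneg_left hconv
          positivity
      _ = B * M * r := by
          rw [hεK, hB, hK]; field_simp
  -- B ≤ A
  have hBA : B ≤ A := by
    have key := aux_key c hc
    rw [hA, hB, ← sub_nonneg]
    have heq : 1 + Real.exp c - (Real.exp c - 1) / c - (Real.exp c - 1) / c =
        (c * (1 + Real.exp c) - 2 * (Real.exp c - 1)) / c := by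
      field_simp; ring
    rw [heq]
    exact div_nonneg (by linarith) hc.le
  calc ‖gradient g θ - gradient g ϑ‖ ≤ B * M * r := hstep
    _ = (B * L0 + B * L1 * ‖gradient g ϑ‖) * r := by rw [hM]; ring
    _ ≤ (A * L0 + B * L1 * ‖gradient g ϑ‖) * r := by
        apply mul_le_mul_of_nonneg_right _ hr0
        nlinarith [hL0.le]
end

section
/- Let R ∈ R^{N×N} be a nonnegative row-stochastic matrix (R·1 = 1) whose induced directed graph contains a spanning tree, and with positive diagonal entries. Then R has a nonnegative left eigenvector u^T associated with eigenvalue 1 such that u^T·1 = N, and the spectral radius of R - (1/N)·1·u^T is strictly less than 1. -/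
lemma align_lemma {N : ℕ} (c : Fin N → ℝ) (z : Fin N → ℂ) (w : ℂ)
    (hc : ∀ j, 0 ≤ c j) (hsum : ∑ j, c j = 1)
    (heq : ∑ j, (c j : ℂ) * z j = w)
    (hb : ∀ j, ‖(z j)‖ ≤ ‖w‖) :
    ∀ j, 0 < c j → z j = w := by
  intro j hj
  have habs : ∀ k, Complex.normSq (z k) ≤ Complex.normSq w := by
    intro k
    rw [Complex.normSq_eq_norm_sq, Complex.normSq_eq_norm_sq]
    exact pow_le_pow_left₀ (norm_nonneg _) (hb k) 2
  have hterm : ∀ k, (z k * (starRingEnd ℂ) w).re ≤ Complex.normSq w := by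
    intro k
    calc (z k * (starRingEnd ℂ) w).re ≤ ‖(z k * (starRingEnd ℂ) w)‖ :=
          Complex.re_le_norm _
      _ = ‖(z k)‖ * ‖w‖ := by rw [norm_mul, Complex.norm_conj]
      _ ≤ ‖w‖ * ‖w‖ :=
          mul_le_mul_of_nonneg_right (hb k) (norm_nonneg _)
      _ = Complex.normSq w := by rw [Complex.normSq_eq_norm_sq]; ring
  have h1 : ∑ k, c k * (z k * (starRingEnd ℂ) w).re = Complex.normSq w := by
    have h2 : ((∑ k, (c k : ℂ) * z k) * (starRingEnd ℂ) w).re = Complex.normSq w := by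
      rw [heq, Complex.mul_conj, Complex.ofReal_re]
    rw [Finset.sum_mul] at h2
    rw [← h2, Complex.re_sum]
    congr 1; funext k
    rw [mul_assoc, Complex.re_ofReal_mul]
  have hsum0 : ∑ k, c k * (Complex.normSq w - (z k * (starRingEnd ℂ) w).re) = 0 := by
    have h3 : ∑ k, c k * (Complex.normSq w - (z k * (starRingEnd ℂ) w).re)
        = (∑ k, c k) * Complex.normSq w - ∑ k, c k * (z k * (starRingEnd ℂ) w).re := by
      rw [Finset.sum_mul, ← Finset.sum_sub_distrib]
      congr 1; funext k; ring
    rw [h3, hsum, h1]; ring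
  have hzero : c j * (Complex.normSq w - (z j * (starRingEnd ℂ) w).re) = 0 :=
    (Finset.sum_eq_zero_iff_of_nonneg (fun k _ => by
      have := hterm k; have := hc k; nlinarith)).1 hsum0 j (Finset.mem_univ j)
  have hre : (z j * (starRingEnd ℂ) w).re = Complex.normSq w := by nlinarith [hterm j]
  have hle : Complex.normSq (z j - w) ≤ 0 := by
    rw [Complex.normSq_sub]
    nlinarith [habs j]
  exact sub_eq_zero.1 (Complex.normSq_eq_zero.1 (le_antisymm hle (Complex.normSq_nonneg _)))



lemma const_of_fixed {N : ℕ} (R : Matrix (Fin N) (Fin N) ℝ)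
    (hnonneg : ∀ i j, 0 ≤ R i j) (hrow : ∀ i, ∑ j, R i j = 1)
    (r : Fin N) (hr : ∀ i, Relation.ReflTransGen (fun j i => 0 < R i j) r i)
    (x : Fin N → ℂ) (hx : ∀ i, ∑ j, (R i j : ℂ) * x j = x i) :
    ∀ i, x i = x r := by
  set y : Fin N → ℂ := fun i => x i - x r with hy_def
  have hy : ∀ i, ∑ j, (R i j : ℂ) * y j = y i := by
    intro i
    have : ∑ j, (R i j : ℂ) * y j = (∑ j, (R i j : ℂ) * x j) - (∑ j, (R i j : ℂ)) * x r := by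
      rw [Finset.sum_mul, ← Finset.sum_sub_distrib]; congr 1; funext j; ring
    rw [this, hx i]
    have : (∑ j, (R i j : ℂ)) = 1 := by
      rw [← Complex.ofReal_sum, hrow i, Complex.ofReal_one]
    rw [this, one_mul]
  obtain ⟨i0, -, hmax⟩ := Finset.exists_max_image Finset.univ (fun i => ‖(y i)‖)
    ⟨r, Finset.mem_univ r⟩
  have key : ∀ i, Relation.ReflTransGen (fun j i => 0 < R i j) r i → y i = y i0 → y r = y i0 := by
    intro i hpath
    induction hpath with
    | refl => exact fun h => h
    | tail hab hbc ih =>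
      rename_i b c
      intro hc
      apply ih
      have := align_lemma (R c) y (y c) (hnonneg c) (hrow c) (hy c)
        (fun j => by rw [hc]; exact hmax j (Finset.mem_univ j)) b hbc
      rw [this, hc]
  have hr0 : y r = y i0 := key i0 (hr i0) rfl
  have hyr : y r = 0 := by simp [hy_def]
  have hi0 : y i0 = 0 := hr0.symm.trans hyr
  intro i
  have : ‖(y i)‖ ≤ 0 := by
    have := hmax i (Finset.mem_univ i)
    rwa [hi0, norm_zero] at this
  have : y i = 0 := by
    simpa using norm_eq_zero.1 (le_antisymm this (norm_nonneg _))
  exact sub_eq_zero.1 this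

lemma eig_one {N : ℕ} (R : Matrix (Fin N) (Fin N) ℝ)
    (hnonneg : ∀ i j, 0 ≤ R i j) (hrow : ∀ i, ∑ j, R i j = 1)
    (hdiag : ∀ i, 0 < R i i)
    (μ : ℂ) (hμ : 1 ≤ ‖μ‖)
    (x : Fin N → ℂ) (hx0 : x ≠ 0) (hx : ∀ i, ∑ j, (R i j : ℂ) * x j = μ * x i) :
    μ = 1 := by
  have hNe : Nonempty (Fin N) := by
    by_contra h
    exact hx0 (funext fun i => absurd ⟨i⟩ h)
  obtain ⟨i, -, hmax⟩ := Finset.exists_max_image Finset.univ (fun i => ‖(x i)‖)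
    Finset.univ_nonempty
  have hxi : 0 < ‖(x i)‖ := by
    obtain ⟨k, hk⟩ := Function.ne_iff.1 hx0
    calc (0:ℝ) < ‖(x k)‖ := by simpa using norm_pos_iff.mpr hk
      _ ≤ ‖(x i)‖ := hmax k (Finset.mem_univ k)
  -- (μ - R i i) * x i = ∑ j ≠ i, R i j * x j
  have hsplit : (μ - (R i i : ℂ)) * x i = ∑ j ∈ Finset.univ.erase i, (R i j : ℂ) * x j := by
    have := hx i
    rw [← Finset.add_sum_erase _ _ (Finset.mem_univ i)] at this
    linear_combination -this
  have habs1 : ‖(μ - (R i i : ℂ))‖ * ‖(x i)‖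
      ≤ (1 - R i i) * ‖(x i)‖ := by
    rw [← norm_mul, hsplit]
    calc ‖(∑ j ∈ Finset.univ.erase i, (R i j : ℂ) * x j)‖
        ≤ ∑ j ∈ Finset.univ.erase i, ‖((R i j : ℂ) * x j)‖ :=
          norm_sum_le _ _
      _ ≤ ∑ j ∈ Finset.univ.erase i, R i j * ‖(x i)‖ := by
          apply Finset.sum_le_sum
          intro j _
          rw [norm_mul, Complex.norm_real, Real.norm_eq_abs, abs_of_nonneg (hnonneg i j)]
          exact mul_le_mul_of_nonneg_left (hmax j (Finset.mem_univ j)) (hnonneg i j)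
      _ = (1 - R i i) * ‖(x i)‖ := by
          rw [← Finset.sum_mul]
          congr 1
          have := hrow i
          rw [← Finset.add_sum_erase _ _ (Finset.mem_univ i)] at this
          linarith
  have habs : ‖(μ - (R i i : ℂ))‖ ≤ 1 - R i i :=
    le_of_mul_le_mul_right habs1 hxi
  have h1 : (μ.re - R i i)^2 + μ.im^2 ≤ (1 - R i i)^2 := by
    have h2 : Complex.normSq (μ - (R i i:ℂ)) ≤ (1 - R i i)^2 := by
      rw [Complex.normSq_eq_norm_sq]
      have h0 : (0:ℝ) ≤ 1 - R i i := le_trans (norm_nonneg _) habs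
      nlinarith [norm_nonneg (μ - (R i i:ℂ))]
    simpa [Complex.normSq_apply, pow_two] using h2
  have h3 : 1 ≤ μ.re^2 + μ.im^2 := by
    have : Complex.normSq μ = μ.re^2 + μ.im^2 := by simp [Complex.normSq_apply, pow_two]
    nlinarith [Complex.normSq_eq_norm_sq μ]
  have ha := hdiag i
  have hrele : μ.re ≤ 1 := by
    have h4 : μ.re - R i i ≤ 1 - R i i := by
      have := Complex.re_le_norm (μ - (R i i : ℂ))
      simp only [Complex.sub_re, Complex.ofReal_re] at this
      linarith [habs]
    linarith
  have hre : μ.re = 1 := by nlinarith [h1, h3, ha, hrele]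
  have him : μ.im = 0 := by
    have h5 : μ.im^2 ≤ 0 := by nlinarith [h1, hre]
    nlinarith [sq_nonneg μ.im]
  exact Complex.ext (by simp [hre]) (by simp [him])

/-- A nonnegative row-stochastic matrix with positive diagonal whose induced
digraph contains a spanning tree has a nonnegative left eigenvector `u` for
eigenvalue 1 with `uᵀ1 = N`, and all complex eigenvalues of
`R - (1/N)·1·uᵀ` have modulus strictly less than 1. -/


theorem stmt_9 {N : ℕ} (hN : 0 < N) (R : Matrix (Fin N) (Fin N) ℝ)
    (hnonneg : ∀ i j, 0 ≤ R i j)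
    (hrow : ∀ i, ∑ j, R i j = 1)
    (hdiag : ∀ i, 0 < R i i)
    (htree : ∃ r : Fin N, ∀ i : Fin N,
      Relation.ReflTransGen (fun j i => 0 < R i j) r i) :
    ∃ u : Fin N → ℝ, (∀ i, 0 ≤ u i) ∧ Matrix.vecMul u R = u ∧
      (∑ i, u i) = (N : ℝ) ∧
      ∀ μ : ℂ, μ ∈ spectrum ℂ
          ((R - (N : ℝ)⁻¹ • Matrix.of fun _ j => u j).map (algebraMap ℝ ℂ)) →
        ‖μ‖ < 1 := by
  obtain ⟨r, hr⟩ := htree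
  -- Step 1: find a nonzero nonnegative left fixed vector
  have hdet : (R - 1).det = 0 := by
    rw [← Matrix.exists_mulVec_eq_zero_iff]
    refine ⟨fun _ => 1, ?_, ?_⟩
    · intro h
      have := congrFun h ⟨0, hN⟩
      norm_num at this
    · funext i
      simp only [Matrix.mulVec, dotProduct, Matrix.sub_apply, Matrix.one_apply,
        mul_one, Pi.zero_apply]
      rw [Finset.sum_sub_distrib, hrow i]
      simp [Finset.sum_ite_eq]
  obtain ⟨w, hw0, hwfix⟩ := Matrix.exists_vecMul_eq_zero_iff.2 hdet
  have hwR : Matrix.vecMul w R = w := by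
    have : Matrix.vecMul w (R - 1) = Matrix.vecMul w R - Matrix.vecMul w 1 :=
      Matrix.vecMul_sub R 1 w
    rw [hwfix, Matrix.vecMul_one] at this
    exact (sub_eq_zero.1 this.symm)
  set v : Fin N → ℝ := fun i => |w i| with hv_def
  have hwRj : ∀ j, ∑ i, w i * R i j = w j := by
    intro j
    have := congrFun hwR j
    simpa [Matrix.vecMul, dotProduct] using this
  have hge : ∀ j, v j ≤ ∑ i, v i * R i j := by
    intro j
    calc v j = |∑ i, w i * R i j| := by rw [hwRj j]
      _ ≤ ∑ i, |w i * R i j| := Finset.abs_sum_le_sum_abs _ _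
      _ = ∑ i, v i * R i j := by
          congr 1; funext i
          rw [abs_mul, abs_of_nonneg (hnonneg i j)]
  have hsums : ∑ j, ∑ i, v i * R i j = ∑ i, v i := by
    rw [Finset.sum_comm]
    congr 1; funext i
    rw [← Finset.mul_sum, hrow i, mul_one]
  have heqv : ∀ j, ∑ i, v i * R i j = v j := by
    have h0 : ∑ j, ((∑ i, v i * R i j) - v j) = 0 := by
      rw [Finset.sum_sub_distrib, hsums]; ring
    intro j
    have := (Finset.sum_eq_zero_iff_of_nonneg (fun k _ => sub_nonneg.2 (hge k))).1 h0 j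
      (Finset.mem_univ j)
    linarith
  have hS : 0 < ∑ i, v i := by
    obtain ⟨k, hk⟩ := Function.ne_iff.1 hw0
    exact Finset.sum_pos' (fun i _ => abs_nonneg _)
      ⟨k, Finset.mem_univ k, abs_pos.2 hk⟩
  set S := ∑ i, v i with hS_def
  refine ⟨fun i => (N / S) * v i, fun i => ?_, ?_, ?_, ?_⟩
  · exact mul_nonneg (div_nonneg (Nat.cast_nonneg N) hS.le) (abs_nonneg _)
  · funext j
    simp only [Matrix.vecMul, dotProduct]
    calc ∑ i, (N / S) * v i * R i j = (N / S) * ∑ i, v i * R i j := by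
          rw [Finset.mul_sum]; congr 1; funext i; ring
      _ = (N / S) * v j := by rw [heqv j]
  · rw [← Finset.mul_sum, ← hS_def]
    field_simp
  · -- Step 2: spectral radius
    set u : Fin N → ℝ := fun i => (N / S) * v i with hu_def
    have hu0 : ∀ i, 0 ≤ u i :=
      fun i => mul_nonneg (div_nonneg (Nat.cast_nonneg N) hS.le) (abs_nonneg _)
    have huR : ∀ j, ∑ i, u i * R i j = u j := by
      intro j
      calc ∑ i, u i * R i j = (N / S) * ∑ i, v i * R i j := by
            rw [Finset.mul_sum]; congr 1; funext i; ring
        _ = u j := by rw [heqv j]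
    have husum : ∑ i, u i = (N : ℝ) := by
      rw [hu_def, ← Finset.mul_sum, ← hS_def]; field_simp
    intro μ hspec
    by_contra habs
    push_neg at habs
    have hμ0 : μ ≠ 0 := by
      intro h; rw [h] at habs; norm_num at habs
    have hNC : ((N : ℂ)) ≠ 0 := Nat.cast_ne_zero.2 hN.ne'
    set A := ((R - (N : ℝ)⁻¹ • Matrix.of fun _ j => u j).map (algebraMap ℝ ℂ)) with hA_def
    have hdet0 : (algebraMap ℂ (Matrix (Fin N) (Fin N) ℂ) μ - A).det = 0 := by
      by_contra hd
      exact (spectrum.mem_iff.1 hspec) ((Matrix.isUnit_iff_isUnit_det _).2 (Ne.isUnit hd))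
    obtain ⟨x, hx0, hxz⟩ := Matrix.exists_mulVec_eq_zero_iff.2 hdet0
    have hxe : ∀ i, ∑ j, ((R i j : ℂ) - (N : ℂ)⁻¹ * (u j : ℂ)) * x j = μ * x i := by
      intro i
      have h1 := congrFun hxz i
      simp only [Matrix.mulVec, dotProduct, Matrix.sub_apply, Pi.zero_apply,
        Matrix.algebraMap_matrix_apply, Matrix.map_apply, Matrix.smul_apply,
        Matrix.of_apply, smul_eq_mul, hA_def] at h1
      simp only [sub_mul] at h1
      rw [Finset.sum_sub_distrib] at h1
      have h2 : ∑ j, (if i = j then (algebraMap ℂ ℂ) μ else 0) * x j = μ * x i := by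
        simp [ite_mul, Finset.sum_ite_eq]
      rw [h2] at h1
      have h3 : ∀ j, (algebraMap ℝ ℂ) (R i j - (N:ℝ)⁻¹ * u j)
          = (R i j : ℂ) - (N : ℂ)⁻¹ * (u j : ℂ) := by
        intro j; push_cast [sub_eq_neg_add]; rfl
      calc ∑ j, ((R i j : ℂ) - (N : ℂ)⁻¹ * (u j : ℂ)) * x j
          = ∑ j, (algebraMap ℝ ℂ) (R i j - (N:ℝ)⁻¹ * u j) * x j := by
            congr 1; funext j; rw [h3]
        _ = μ * x i := by linear_combination -h1
    set d : ℂ := ∑ j, (u j : ℂ) * x j with hd_def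
    have husumC : ∑ i, (u i : ℂ) = (N : ℂ) := by
      calc ∑ i, (u i : ℂ) = ((∑ i, u i : ℝ) : ℂ) := by push_cast; rfl
        _ = (N : ℂ) := by rw [husum]; push_cast; rfl
    have huC : ∀ j, ∑ i, (u i : ℂ) * (R i j : ℂ) = (u j : ℂ) := by
      intro j
      calc ∑ i, (u i : ℂ) * (R i j : ℂ) = ((∑ i, u i * R i j : ℝ) : ℂ) := by push_cast; rfl
        _ = (u j : ℂ) := by rw [huR j]
    have hcoef : ∀ j, ∑ i, (u i : ℂ) * ((R i j : ℂ) - (N:ℂ)⁻¹ * (u j : ℂ)) = 0 := by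
      intro j
      simp only [mul_sub]
      rw [Finset.sum_sub_distrib, huC j, ← Finset.sum_mul, husumC]
      field_simp
      simp
    have hμd : μ * d = 0 := by
      calc μ * d = ∑ j, (u j : ℂ) * (μ * x j) := by
            rw [hd_def, Finset.mul_sum]; congr 1; funext j; ring
        _ = ∑ i, (u i : ℂ) * (∑ j, ((R i j : ℂ) - (N:ℂ)⁻¹ * (u j : ℂ)) * x j) := by
            congr 1; funext i; rw [hxe i]
        _ = ∑ i, ∑ j, (u i : ℂ) * (((R i j : ℂ) - (N:ℂ)⁻¹ * (u j : ℂ)) * x j) := by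
            congr 1; funext i; rw [Finset.mul_sum]
        _ = ∑ j, ∑ i, (u i : ℂ) * (((R i j : ℂ) - (N:ℂ)⁻¹ * (u j : ℂ)) * x j) :=
            Finset.sum_comm
        _ = ∑ j, (∑ i, (u i : ℂ) * ((R i j : ℂ) - (N:ℂ)⁻¹ * (u j : ℂ))) * x j := by
            congr 1; funext j; rw [Finset.sum_mul]; congr 1; funext i; ring
        _ = 0 := Finset.sum_eq_zero fun j _ => by rw [hcoef j, zero_mul]
    have hd0 : d = 0 := by
      rcases mul_eq_zero.1 hμd with h | h
      · exact absurd h hμ0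
      · exact h
    have hRx : ∀ i, ∑ j, (R i j : ℂ) * x j = μ * x i := by
      intro i
      have h5 := hxe i
      simp only [sub_mul] at h5
      rw [Finset.sum_sub_distrib] at h5
      have h6 : ∑ j, (N:ℂ)⁻¹ * (u j : ℂ) * x j = (N:ℂ)⁻¹ * d := by
        rw [hd_def, Finset.mul_sum]; congr 1; funext j; ring
      rw [h6, hd0, mul_zero, sub_zero] at h5
      exact h5
    have hμ1 : μ = 1 := eig_one R hnonneg hrow hdiag μ habs x hx0 hRx
    have hconst : ∀ i, x i = x r :=
      const_of_fixed R hnonneg hrow r hr x (fun i => by rw [hRx i, hμ1, one_mul])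
    have hdN : d = (N : ℂ) * x r := by
      calc d = ∑ j, (u j : ℂ) * x r := by
            rw [hd_def]; congr 1; funext j; rw [hconst j]
        _ = (∑ j, (u j : ℂ)) * x r := (Finset.sum_mul _ _ _).symm
        _ = (N : ℂ) * x r := by rw [husumC]
    have hxr : x r = 0 := by
      rcases mul_eq_zero.1 (hdN.symm.trans hd0) with h | h
      · exact absurd h hNC
      · exact h
    exact hx0 (funext fun i => by rw [hconst i, hxr]; rfl)
end

section
/- Let u, v ∈ R^N with v_i > 0 and u_i ≥ 0 for all i, let κ_v = max_i ||v||/v_i, let ᾱ_k > 0, and let y_1,...,y_N ∈ R^d, g ∈ R^d. Suppose for each i that α_i satisfies |α_i - ᾱ_i|·||y_i|| ≤ ᾱ_i ||y_i - v_i g|| and ᾱ_k ≤ ᾱ_i ≤ (||v||/v_i)ᾱ_k. Then ∑_{i=1}^N ||α_i y_i||² ≤ 6κ_v² ᾱ_k² ∑_{i=1}^N ||y_i - v_i g||² + 3N ᾱ_k² ||v||² ||g||². -/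
open Finset

/-! Split `α • y = (α - ᾱ) • y + ᾱ • (y - v • g) + (ᾱ v) • g`. By `‖a + b + c‖² ≤ 3(‖a‖² + ‖b‖² + ‖c‖²)`,
the deviation bound makes the first two terms each at most `ᾱ ‖y - v • g‖ ≤ κ_v ᾱ_k ‖y - v • g‖`,
and the third is at most `‖v‖ ᾱ_k ‖g‖`; then sum over the `N` indices. -/

theorem norm_add_add_sq_le {E : Type*} [SeminormedAddCommGroup E] (a b c : E) :
    ‖a + b + c‖ ^ 2 ≤ 3 * (‖a‖ ^ 2 + ‖b‖ ^ 2 + ‖c‖ ^ 2) := by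
  have htri : ‖a + b + c‖ ≤ ‖a‖ + ‖b‖ + ‖c‖ := norm_add₃_le
  nlinarith [norm_nonneg (a + b + c), sq_nonneg (‖a‖ - ‖b‖), sq_nonneg (‖b‖ - ‖c‖),
    sq_nonneg (‖a‖ - ‖c‖)]

theorem norm_smul_sq_le_of_abs_sub_mul_norm_le {E : Type*} [NormedAddCommGroup E]
    [NormedSpace ℝ E] {a ā w c M : ℝ} {x g : E} (hā : 0 ≤ ā) (hw : 0 ≤ w)
    (hdev : |a - ā| * ‖x‖ ≤ ā * ‖x - w • g‖) (hc : ā ≤ c) (hM : ā * w ≤ M) :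
    ‖a • x‖ ^ 2 ≤ 6 * c ^ 2 * ‖x - w • g‖ ^ 2 + 3 * M ^ 2 * ‖g‖ ^ 2 := by
  have hsplit : a • x = (a - ā) • x + ā • (x - w • g) + (ā * w) • g := by
    rw [mul_smul]; module
  have hfirst : ‖(a - ā) • x‖ ≤ c * ‖x - w • g‖ := by
    rw [norm_smul, Real.norm_eq_abs]
    exact hdev.trans (by gcongr)
  have hsecond : ‖ā • (x - w • g)‖ ≤ c * ‖x - w • g‖ := by
    rw [norm_smul, Real.norm_of_nonneg hā]
    gcongr
  have hthird : ‖(ā * w) • g‖ ≤ M * ‖g‖ := by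
    rw [norm_smul, Real.norm_of_nonneg (mul_nonneg hā hw)]
    gcongr
  calc ‖a • x‖ ^ 2
      ≤ 3 * (‖(a - ā) • x‖ ^ 2 + ‖ā • (x - w • g)‖ ^ 2 + ‖(ā * w) • g‖ ^ 2) :=
        hsplit ▸ norm_add_add_sq_le _ _ _
    _ ≤ 3 * ((c * ‖x - w • g‖) ^ 2 + (c * ‖x - w • g‖) ^ 2 + (M * ‖g‖) ^ 2) := by
        gcongr
    _ = 6 * c ^ 2 * ‖x - w • g‖ ^ 2 + 3 * M ^ 2 * ‖g‖ ^ 2 := by ring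

theorem stmt_13_general {N d : ℕ} [NeZero N]
    (v : EuclideanSpace ℝ (Fin N))
    (hv : ∀ i, 0 < v i)
    (κv : ℝ) (hκ : κv = Finset.univ.sup' Finset.univ_nonempty (fun i => ‖v‖ / v i))
    (ᾱk : ℝ) (hᾱk : 0 < ᾱk)
    (y : Fin N → EuclideanSpace ℝ (Fin d)) (g : EuclideanSpace ℝ (Fin d))
    (α ᾱ : Fin N → ℝ)
    (hdev : ∀ i, |α i - ᾱ i| * ‖y i‖ ≤ ᾱ i * ‖y i - v i • g‖)
    (hlow : ∀ i, ᾱk ≤ ᾱ i) (hhigh : ∀ i, ᾱ i ≤ (‖v‖ / v i) * ᾱk) :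
    ∑ i, ‖α i • y i‖ ^ 2 ≤
      6 * κv ^ 2 * ᾱk ^ 2 * ∑ i, ‖y i - v i • g‖ ^ 2 +
        3 * (N : ℝ) * ᾱk ^ 2 * ‖v‖ ^ 2 * ‖g‖ ^ 2 := by
  have hterm (i : Fin N) : ‖α i • y i‖ ^ 2 ≤
      6 * (κv * ᾱk) ^ 2 * ‖y i - v i • g‖ ^ 2 + 3 * (‖v‖ * ᾱk) ^ 2 * ‖g‖ ^ 2 := by
    have hratio : ‖v‖ / v i ≤ κv := hκ ▸ le_sup' (fun j => ‖v‖ / v j) (mem_univ i)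
    refine norm_smul_sq_le_of_abs_sub_mul_norm_le (hᾱk.le.trans (hlow i)) (hv i).le (hdev i)
      ((hhigh i).trans (by gcongr)) ?_
    rw [← le_div_iff₀ (hv i), mul_div_right_comm]
    exact hhigh i
  calc ∑ i, ‖α i • y i‖ ^ 2
      ≤ ∑ i, (6 * (κv * ᾱk) ^ 2 * ‖y i - v i • g‖ ^ 2 + 3 * (‖v‖ * ᾱk) ^ 2 * ‖g‖ ^ 2) :=
        sum_le_sum fun i _ => hterm i
    _ = 6 * κv ^ 2 * ᾱk ^ 2 * ∑ i, ‖y i - v i • g‖ ^ 2 +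
          3 * (N : ℝ) * ᾱk ^ 2 * ‖v‖ ^ 2 * ‖g‖ ^ 2 := by
        rw [sum_add_distrib, ← mul_sum, sum_const, card_univ, Fintype.card_fin, nsmul_eq_mul]
        ring

/-- Bound on the total squared magnitude of the stacked clipped directions. -/
theorem stmt_13 {N d : ℕ} [NeZero N]
    (u v : EuclideanSpace ℝ (Fin N))
    (hu : ∀ i, 0 ≤ u i) (hv : ∀ i, 0 < v i)
    (κv : ℝ) (hκ : κv = Finset.univ.sup' Finset.univ_nonempty (fun i => ‖v‖ / v i))
    (ᾱk : ℝ) (hᾱk : 0 < ᾱk)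
    (y : Fin N → EuclideanSpace ℝ (Fin d)) (g : EuclideanSpace ℝ (Fin d))
    (α ᾱ : Fin N → ℝ)
    (hdev : ∀ i, |α i - ᾱ i| * ‖y i‖ ≤ ᾱ i * ‖y i - v i • g‖)
    (hlow : ∀ i, ᾱk ≤ ᾱ i) (hhigh : ∀ i, ᾱ i ≤ (‖v‖ / v i) * ᾱk) :
    ∑ i, ‖α i • y i‖ ^ 2 ≤
      6 * κv ^ 2 * ᾱk ^ 2 * ∑ i, ‖y i - v i • g‖ ^ 2 +
        3 * (N : ℝ) * ᾱk ^ 2 * ‖v‖ ^ 2 * ‖g‖ ^ 2 :=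
  stmt_13_general v hv κv hκ ᾱk hᾱk y g α ᾱ hdev hlow hhigh
end

section
/- Suppose a sequence of nonnegative vectors u_k ∈ R² satisfies u_{k+1} ≤ G u_k + b_k componentwise, where G = [[(1+σ_R²)/2, α²C_{x,1}], [C_{y,1}, (1+σ_C²)/2]] with 0 ≤ σ_R, σ_C < 1, C_{x,1}, C_{y,1} ≥ 0, and α² C_{x,1} C_{y,1} ≤ (1-σ_R²)(1-σ_C²)/8, and b_k ∈ R² are nonnegative. Then det(I - G) ≥ (1-σ_R²)(1-σ_C²)/8, (I - G)^{-1} is nonnegative, and ∑_{k=0}^K u_k ≤ (I-G)^{-1} u_0 + (I-G)^{-1} ∑_{k=0}^{K-1} b_k componentwise. -/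
/-- Summation of a coupled 2×2 linear error recursion under a small-gain
condition on the coupling matrix. -/
theorem stmt_14 (σR σC α Cx1 Cy1 : ℝ)
    (hσR0 : 0 ≤ σR) (hσR1 : σR < 1) (hσC0 : 0 ≤ σC) (hσC1 : σC < 1)
    (hCx1 : 0 ≤ Cx1) (hCy1 : 0 ≤ Cy1)
    (hα : α ^ 2 * Cx1 * Cy1 ≤ (1 - σR ^ 2) * (1 - σC ^ 2) / 8)
    (u b : ℕ → Fin 2 → ℝ)
    (hu : ∀ k i, 0 ≤ u k i) (hb : ∀ k i, 0 ≤ b k i)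
    (G : Matrix (Fin 2) (Fin 2) ℝ)
    (hG : G = !![(1 + σR ^ 2) / 2, α ^ 2 * Cx1; Cy1, (1 + σC ^ 2) / 2])
    (hrec : ∀ k i, u (k + 1) i ≤ G.mulVec (u k) i + b k i)
    (K : ℕ) :
    (1 - σR ^ 2) * (1 - σC ^ 2) / 8 ≤ (1 - G).det ∧
      (∀ i j, 0 ≤ (1 - G)⁻¹ i j) ∧
      ∀ i, (∑ k ∈ Finset.range (K + 1), u k) i ≤
        (1 - G)⁻¹.mulVec (u 0) i +
          (1 - G)⁻¹.mulVec (∑ k ∈ Finset.range K, b k) i := by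
  have hR2 : σR ^ 2 < 1 := by nlinarith
  have hC2 : σC ^ 2 < 1 := by nlinarith
  have hα2 : (0:ℝ) ≤ α ^ 2 := sq_nonneg α
  have hAeq : (1 - G) = !![(1 - σR ^ 2) / 2, -(α ^ 2 * Cx1); -Cy1, (1 - σC ^ 2) / 2] := by
    subst hG
    ext i j
    fin_cases i <;> fin_cases j <;>
      simp [Matrix.one_apply] <;> ring
  have hdet : (1 - G).det = (1 - σR ^ 2) / 2 * ((1 - σC ^ 2) / 2) - α ^ 2 * Cx1 * Cy1 := by
    rw [hAeq, Matrix.det_fin_two_of]; ring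
  have hdetge : (1 - σR ^ 2) * (1 - σC ^ 2) / 8 ≤ (1 - G).det := by
    rw [hdet]; nlinarith
  have hdetpos : 0 < (1 - G).det := lt_of_lt_of_le (by nlinarith) hdetge
  have hinv : (1 - G)⁻¹ =
      (1 - G).det⁻¹ • !![(1 - σC ^ 2) / 2, α ^ 2 * Cx1; Cy1, (1 - σR ^ 2) / 2] := by
    rw [Matrix.inv_def, Ring.inverse_eq_inv']
    congr 1
    rw [hAeq, Matrix.adjugate_fin_two_of]
    norm_num
  have hdinv : (0:ℝ) ≤ (1 - G).det⁻¹ := le_of_lt (inv_pos.mpr hdetpos)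
  have hnn : ∀ i j, 0 ≤ (1 - G)⁻¹ i j := by
    intro i j
    rw [hinv]
    fin_cases i <;> fin_cases j <;>
      simp [Matrix.smul_apply] <;>
      first
        | exact mul_nonneg hdinv (by nlinarith)
        | exact mul_nonneg hdinv (by positivity)
  have hGnn : ∀ i j, 0 ≤ G i j := by
    intro i j
    rw [hG]
    fin_cases i <;> fin_cases j <;> simp <;> positivity
  refine ⟨hdetge, hnn, ?_⟩
  intro i
  set S : Fin 2 → ℝ := fun j => ∑ k ∈ Finset.range (K + 1), u k j with hS
  have hSapply : (∑ k ∈ Finset.range (K + 1), u k) = S := by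
    ext j; simp [hS]
  set B : Fin 2 → ℝ := fun j => ∑ k ∈ Finset.range K, b k j with hB
  have hBapply : (∑ k ∈ Finset.range K, b k) = B := by
    ext j; simp [hB]
  -- key inequality: (1-G).mulVec S ≤ u 0 + B componentwise
  have key : ∀ j, (1 - G).mulVec S j ≤ u 0 j + B j := by
    intro j
    have h1 : S j = u 0 j + ∑ k ∈ Finset.range K, u (k + 1) j := by
      simp [hS, Finset.sum_range_succ']; ring
    have h2 : ∑ k ∈ Finset.range K, u (k + 1) j ≤
        (∑ k ∈ Finset.range K, G.mulVec (u k) j) + B j := by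
      rw [hB, ← Finset.sum_add_distrib]
      exact Finset.sum_le_sum fun k _ => hrec k j
    have h3 : ∑ k ∈ Finset.range K, G.mulVec (u k) j ≤ G.mulVec S j := by
      have : ∑ k ∈ Finset.range K, G.mulVec (u k) j =
          G.mulVec (fun l => ∑ k ∈ Finset.range K, u k l) j := by
        simp only [Matrix.mulVec, dotProduct, Finset.mul_sum]
        rw [Finset.sum_comm]
      rw [this]
      simp only [Matrix.mulVec, dotProduct]
      apply Finset.sum_le_sum
      intro l _
      apply mul_le_mul_of_nonneg_left _ (hGnn j l)
      simp [hS, Finset.sum_range_succ]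
      exact hu K l
    have h4 : (1 - G).mulVec S j = S j - G.mulVec S j := by
      rw [Matrix.sub_mulVec]
      simp [Matrix.one_mulVec]
    rw [h4]
    have := h1 ▸ (le_trans (add_le_add (le_refl (u 0 j)) h2)
      (by linarith [h3] : u 0 j + ((∑ k ∈ Finset.range K, G.mulVec (u k) j) + B j)
        ≤ u 0 j + (G.mulVec S j + B j)))
    linarith [this]
  -- apply the nonnegative inverse
  have hunit : IsUnit (1 - G).det := isUnit_iff_ne_zero.mpr (ne_of_gt hdetpos)
  have hrecov : (1 - G)⁻¹.mulVec ((1 - G).mulVec S) = S := by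
    rw [Matrix.mulVec_mulVec, Matrix.nonsing_inv_mul _ hunit, Matrix.one_mulVec]
  have hmono : (1 - G)⁻¹.mulVec ((1 - G).mulVec S) i ≤ (1 - G)⁻¹.mulVec (fun j => u 0 j + B j) i := by
    simp only [Matrix.mulVec, dotProduct]
    apply Finset.sum_le_sum
    intro l _
    exact mul_le_mul_of_nonneg_left (key l) (hnn i l)
  have hsplit : (1 - G)⁻¹.mulVec (fun j => u 0 j + B j) i =
      (1 - G)⁻¹.mulVec (u 0) i + (1 - G)⁻¹.mulVec B i := by
    simp only [Matrix.mulVec, dotProduct, mul_add, Finset.sum_add_distrib]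
  rw [hSapply, hBapply]
  calc S i = (1 - G)⁻¹.mulVec ((1 - G).mulVec S) i := by rw [hrecov]
    _ ≤ (1 - G)⁻¹.mulVec (fun j => u 0 j + B j) i := hmono
    _ = _ := hsplit
end
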